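/- arXiv:1412.5032 — 12 statements merged into one kernel-verified Lean document; each statement's English description precedes it below -/
import Mathlib

section
/- If f : ℝ → X is compact almost automorphic (i.e., for every sequence of reals there is a subsequence along which the translates converge pointwise to a continuous limit g, and the reverse translates of g converge pointwise back to f, with g continuous in each case), then f is uniformly continuous. -/
open Filter Topology Set

/-- A compact almost automorphic function (translates converging uniformly on
compact sets to a continuous limit `g`, and back) is uniformly continuous. -/
theorem stmt_1 {X : Type*} [MetricSpace X] (f : ℝ → X) (hf : Continuous f)
    (haa : ∀ t' : ℕ → ℝ, ∃ φ : ℕ → ℕ, StrictMono φ ∧ ∃ g : ℝ → X,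
      Continuous g ∧
      (∀ K : Set ℝ, IsCompact K →
        TendstoUniformlyOn (fun n t => f (t + t' (φ n))) g atTop K) ∧
      (∀ K : Set ℝ, IsCompact K →
        TendstoUniformlyOn (fun n t => g (t - t' (φ n))) f atTop K)) :
    UniformContinuous f := by
  by_contra hcon
  rw [Metric.uniformContinuous_iff] at hcon
  push_neg at hcon
  obtain ⟨ε, hε, hseq⟩ := hcon
  choose s u hd hfd using fun n : ℕ => hseq (1 / (n + 1)) (by positivity)
  obtain ⟨φ, hφ, g, hg, hfg, -⟩ := haa s
  set v : ℕ → ℝ := fun n => u (φ n) - s (φ n) with hvdef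
  have hvb : ∀ n, |v n| < 1 / (φ n + 1) := by
    intro n
    have := hd (φ n)
    simpa [v, Real.dist_eq, abs_sub_comm] using this
  have hv : Tendsto v atTop (𝓝 0) := by
    have h1 : Tendsto (fun k : ℕ => (1 : ℝ) / (k + 1)) atTop (𝓝 0) :=
      tendsto_one_div_add_atTop_nhds_zero_nat
    refine squeeze_zero_norm (fun n => (hvb n).le) (h1.comp hφ.tendsto_atTop)
  have hvK : ∀ n, v n ∈ Icc (-1 : ℝ) 1 := by
    intro n
    have h1 : (1 : ℝ) / (φ n + 1) ≤ 1 := by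
      rw [div_le_one (by positivity)]
      linarith [Nat.cast_nonneg (α := ℝ) (φ n)]
    have := (hvb n).le.trans h1
    rw [abs_le] at this
    exact ⟨this.1, this.2⟩
  have hK2 := hfg (Icc (-1 : ℝ) 1) isCompact_Icc
  -- A: f (s (φ n)) → g 0
  have h0 : Tendsto (fun n => f (0 + s (φ n))) atTop (𝓝 (g 0)) :=
    hK2.tendsto_at (by norm_num : (0 : ℝ) ∈ Icc (-1 : ℝ) 1)
  have hA : Tendsto (fun n => dist (f (s (φ n))) (g 0)) atTop (𝓝 0) := by
    have := tendsto_iff_dist_tendsto_zero.1 h0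
    simpa using this
  -- B: g (v n) → g 0
  have hB : Tendsto (fun n => dist (g 0) (g (v n))) atTop (𝓝 0) := by
    have hgv : Tendsto (fun n => g (v n)) atTop (𝓝 (g 0)) :=
      (hg.continuousAt.tendsto).comp hv
    have := tendsto_iff_dist_tendsto_zero.1 hgv
    simpa [dist_comm] using this
  -- C: dist (g (v n)) (f (u (φ n))) → 0
  have hC : Tendsto (fun n => dist (g (v n)) (f (u (φ n)))) atTop (𝓝 0) := by
    rw [Metric.tendstoUniformlyOn_iff] at hK2
    refine Metric.tendsto_atTop.2 fun ε' hε' => ?_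
    obtain ⟨N, hN⟩ := eventually_atTop.1 (hK2 ε' hε')
    refine ⟨N, fun n hn => ?_⟩
    have := hN n hn (v n) (hvK n)
    have hveq : v n + s (φ n) = u (φ n) := by simp [v]
    rw [hveq] at this
    simpa [Real.dist_eq, abs_of_nonneg dist_nonneg] using this
  have key : Tendsto (fun n => dist (f (s (φ n))) (f (u (φ n)))) atTop (𝓝 0) := by
    have hsum := hA.add (hB.add hC)
    rw [add_zero, add_zero] at hsum
    refine squeeze_zero (fun n => dist_nonneg) (fun n => ?_) hsum
    calc dist (f (s (φ n))) (f (u (φ n)))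
        ≤ dist (f (s (φ n))) (g 0) + dist (g 0) (f (u (φ n))) := dist_triangle _ _ _
      _ ≤ dist (f (s (φ n))) (g 0) +
          (dist (g 0) (g (v n)) + dist (g (v n)) (f (u (φ n)))) := by
          gcongr
          exact dist_triangle _ _ _
  obtain ⟨n, hn⟩ := (key.eventually (eventually_lt_nhds hε)).exists
  exact absurd (hfd (φ n)) (not_le.2 hn)
end

section
/- Let f : ℝ × Y → X be compact almost automorphic in the first variable uniformly for the second variable in compact subsets of Y, and continuous in the second variable. Then f is jointly continuous on ℝ × Y. -/
open Filter Topology Set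

/-- A function compact almost automorphic in the first variable, uniformly with
respect to the second variable in compact sets, and continuous in the second
variable, is jointly continuous. -/
theorem stmt_3 {X Y : Type*} [MetricSpace X] [MetricSpace Y] (f : ℝ → Y → X)
    (hcont : ∀ t : ℝ, Continuous (f t))
    (haa : ∀ t' : ℕ → ℝ, ∃ φ : ℕ → ℕ, StrictMono φ ∧ ∃ g : ℝ → Y → X,
      (∀ y : Y, Continuous (fun t => g t y)) ∧
      (∀ K : Set Y, IsCompact K → ∀ I : Set ℝ, IsCompact I →
        TendstoUniformlyOn (fun n (p : ℝ × Y) => f (p.1 + t' (φ n)) p.2)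
          (fun p => g p.1 p.2) atTop (I ×ˢ K)) ∧
      (∀ K : Set Y, IsCompact K → ∀ I : Set ℝ, IsCompact I →
        TendstoUniformlyOn (fun n (p : ℝ × Y) => g (p.1 - t' (φ n)) p.2)
          (fun p => f p.1 p.2) atTop (I ×ˢ K))) :
    Continuous (fun p : ℝ × Y => f p.1 p.2) := by
  rw [continuous_iff_seqContinuous]
  intro p a hp
  apply tendsto_of_subseq_tendsto
  intro ns hns
  obtain ⟨φ, hφ, g, hgcont, h1, h2⟩ := haa (fun n => (p (ns n)).1 - a.1)
  refine ⟨φ, ?_⟩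
  have hns' : Tendsto (fun n => ns (φ n)) atTop atTop := hns.comp hφ.tendsto_atTop
  have hpq : Tendsto (fun n => p (ns (φ n))) atTop (𝓝 a) := hp.comp hns'
  have hy : Tendsto (fun n => (p (ns (φ n))).2) atTop (𝓝 a.2) :=
    ((continuous_snd.tendsto a).comp hpq)
  have ht : Tendsto (fun n => (p (ns (φ n))).1) atTop (𝓝 a.1) :=
    ((continuous_fst.tendsto a).comp hpq)
  have ht0 : Tendsto (fun n => (p (ns (φ n))).1 - a.1) atTop (𝓝 0) := by
    simpa using ht.sub_const a.1
  have hK : IsCompact (insert a.2 (Set.range fun n => (p (ns (φ n))).2)) :=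
    hy.isCompact_insert_range
  -- g a.1 = f a.1 on all of Y
  have hgf : ∀ y, g a.1 y = f a.1 y := by
    intro y
    have h2' := h2 {y} isCompact_singleton {a.1} isCompact_singleton
    have hptw : Tendsto (fun n => g (a.1 - ((p (ns (φ n))).1 - a.1)) y) atTop
        (𝓝 (f a.1 y)) :=
      h2'.tendsto_at (show ((a.1 : ℝ), y) ∈ ({a.1} ×ˢ {y} : Set (ℝ × Y)) by simp)
    have harg : Tendsto (fun n => a.1 - ((p (ns (φ n))).1 - a.1)) atTop (𝓝 a.1) := by
      simpa using (tendsto_const_nhds (x := a.1) (f := atTop)).sub ht0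
    have hcg : Tendsto (fun n => g (a.1 - ((p (ns (φ n))).1 - a.1)) y) atTop
        (𝓝 (g a.1 y)) := ((hgcont y).tendsto a.1).comp harg
    exact tendsto_nhds_unique hcg hptw
  have h1' := h1 _ hK {a.1} isCompact_singleton
  rw [Metric.tendstoUniformlyOn_iff] at h1'
  rw [Metric.tendsto_atTop]
  intro ε hε
  have hA := h1' (ε / 2) (by linarith)
  have hB : Tendsto (fun n => f a.1 (p (ns (φ n))).2) atTop (𝓝 (f a.1 a.2)) :=
    ((hcont a.1).tendsto a.2).comp hy
  have hB' := (Metric.tendsto_atTop.mp hB) (ε / 2) (by linarith)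
  rw [eventually_atTop] at hA
  obtain ⟨N1, hN1⟩ := hA
  obtain ⟨N2, hN2⟩ := hB'
  refine ⟨max N1 N2, fun n hn => ?_⟩
  have h1n := hN1 n (le_trans (le_max_left _ _) hn) (a.1, (p (ns (φ n))).2)
    (by simp [Set.mem_prod])
  have h2n := hN2 n (le_trans (le_max_right _ _) hn)
  simp only [add_sub_cancel] at h1n
  rw [hgf] at h1n
  calc dist ((fun p : ℝ × Y => f p.1 p.2) (p (ns (φ n)))) (f a.1 a.2)
      ≤ dist (f (p (ns (φ n))).1 (p (ns (φ n))).2) (f a.1 (p (ns (φ n))).2)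
        + dist (f a.1 (p (ns (φ n))).2) (f a.1 a.2) := dist_triangle _ _ _
    _ < ε / 2 + ε / 2 := by
        rw [dist_comm] at h1n
        exact add_lt_add h1n h2n
    _ = ε := by ring
end

section
/- Let f : ℝ × Y → X be compact almost automorphic in the first variable uniformly for the second variable in compact subsets of Y, and continuous in the second variable. Then for every compact subset K of Y, f is uniformly continuous on ℝ × K. -/
open Filter Topology Set

/-- A function compact almost automorphic in the first variable, uniformly with
respect to the second variable in compact sets, and continuous in the second
variable, is uniformly continuous on `ℝ × K` for every compact `K`. -/
theorem stmt_4 {X Y : Type*} [MetricSpace X] [MetricSpace Y] (f : ℝ → Y → X)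
    (hcont : ∀ t : ℝ, Continuous (f t))
    (haa : ∀ t' : ℕ → ℝ, ∃ φ : ℕ → ℕ, StrictMono φ ∧ ∃ g : ℝ → Y → X,
      (∀ y : Y, Continuous (fun t => g t y)) ∧
      (∀ K : Set Y, IsCompact K → ∀ I : Set ℝ, IsCompact I →
        TendstoUniformlyOn (fun n (p : ℝ × Y) => f (p.1 + t' (φ n)) p.2)
          (fun p => g p.1 p.2) atTop (I ×ˢ K)) ∧
      (∀ K : Set Y, IsCompact K → ∀ I : Set ℝ, IsCompact I →
        TendstoUniformlyOn (fun n (p : ℝ × Y) => g (p.1 - t' (φ n)) p.2)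
          (fun p => f p.1 p.2) atTop (I ×ˢ K))) :
    ∀ K : Set Y, IsCompact K →
      UniformContinuousOn (fun p : ℝ × Y => f p.1 p.2) (Set.univ ×ˢ K) := by
  intro K hK
  -- Claim B : the family {f t | t : ℝ} is equicontinuous (within K) at every point of K
  have claimB : ∀ y₀ ∈ K, ∀ ε > 0, ∃ δ > 0, ∀ (t : ℝ), ∀ w ∈ K, dist w y₀ < δ →
      dist (f t w) (f t y₀) < ε := by
    intro y₀ hy₀ ε hε
    by_contra hcon
    push_neg at hcon
    choose ts w hwK hwd hd using fun n : ℕ => hcon (1/(n+1)) (by positivity)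
    obtain ⟨φ, hφ, g, hgc, hfw, -⟩ := haa ts
    have huc := hfw K hK {0} isCompact_singleton
    have hw0 : Tendsto (fun n => w n) atTop (𝓝 y₀) :=
      tendsto_iff_dist_tendsto_zero.mpr
        (squeeze_zero (fun n => dist_nonneg) (fun n => (hwd n).le)
          tendsto_one_div_add_atTop_nhds_zero_nat)
    have h1 : TendstoUniformlyOn (fun m y => f ((0:ℝ) + ts (φ m)) y)
        (fun y => g 0 y) atTop K := by
      intro u hu
      filter_upwards [huc u hu] with m hm y hy
      exact hm (0, y) ⟨rfl, hy⟩
    have hg0 : ContinuousOn (fun y => g 0 y) K :=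
      h1.continuousOn (Eventually.of_forall fun m => (hcont _).continuousOn).frequently
    have hgw : Tendsto (fun n => g 0 (w (φ n))) atTop (𝓝 (g 0 y₀)) := by
      have hsub : Tendsto (fun n => w (φ n)) atTop (𝓝[K] y₀) :=
        tendsto_nhdsWithin_of_tendsto_nhds_of_eventually_within _
          (hw0.comp hφ.tendsto_atTop) (Eventually.of_forall fun n => hwK _)
      exact ((hg0 y₀ hy₀).tendsto).comp hsub
    have E1 := (Metric.tendstoUniformlyOn_iff.mp huc) (ε/3) (by positivity)
    have E2 := (Metric.tendsto_nhds.mp hgw) (ε/3) (by positivity)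
    obtain ⟨n, hn1, hn2⟩ := (E1.and E2).exists
    have t1 := hn1 (0, w (φ n)) ⟨rfl, hwK _⟩
    have t3 := hn1 (0, y₀) ⟨rfl, hy₀⟩
    simp only [zero_add] at t1 t3
    have hge := hd (φ n)
    have tri := dist_triangle4 (f (ts (φ n)) (w (φ n))) (g 0 (w (φ n))) (g 0 y₀)
      (f (ts (φ n)) y₀)
    rw [dist_comm] at t1
    linarith
  -- Claim A : equicontinuity in the time variable, uniformly in t and y ∈ K
  have claimA : ∀ ε > 0, ∃ δ > 0, ∀ t s : ℝ, dist t s < δ → ∀ y ∈ K,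
      dist (f t y) (f s y) < ε := by
    intro ε hε
    by_contra hcon
    push_neg at hcon
    choose ts ss hts y hyK hd using fun n : ℕ => hcon (1/(n+1)) (by positivity)
    obtain ⟨φ, hφ, g, hgc, hfw, -⟩ := haa ts
    obtain ⟨y₀, hy₀, ψ, hψ, hyl⟩ := hK.tendsto_subseq (fun n => hyK (φ n))
    set n' : ℕ → ℕ := fun n => φ (ψ n) with hn'
    set τ : ℕ → ℝ := fun n => ss (n' n) - ts (n' n) with hτ
    have hτ1 : ∀ n : ℕ, |τ n| ≤ 1/(n+1) := by
      intro n
      have h1 : |τ n| < 1/(n' n + 1) := by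
        simpa [Real.dist_eq, abs_sub_comm, τ] using hts (n' n)
      have hle : n ≤ n' n := le_trans hψ.le_apply hφ.le_apply
      have h2 : (1:ℝ)/(n' n + 1) ≤ 1/(n+1) := by
        apply one_div_le_one_div_of_le (by positivity)
        exact_mod_cast Nat.add_le_add_right hle 1
      linarith
    have hτ0 : Tendsto τ atTop (𝓝 0) :=
      squeeze_zero_norm hτ1 tendsto_one_div_add_atTop_nhds_zero_nat
    -- transfer Claim B to g
    have hBg : ∀ ε' > 0, ∃ δ > 0, ∀ (r : ℝ), ∀ w ∈ K, dist w y₀ < δ →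
        dist (g r w) (g r y₀) ≤ ε' := by
      intro ε' hε'
      obtain ⟨δ, hδ, hB⟩ := claimB y₀ hy₀ ε' hε'
      refine ⟨δ, hδ, fun r w hw hwd => ?_⟩
      have h1 : Tendsto (fun m => f (r + ts (φ m)) w) atTop (𝓝 (g r w)) :=
        (hfw K hK {r} isCompact_singleton).tendsto_at
          (show ((r, w) : ℝ × Y) ∈ {r} ×ˢ K from ⟨rfl, hw⟩)
      have h2 : Tendsto (fun m => f (r + ts (φ m)) y₀) atTop (𝓝 (g r y₀)) :=
        (hfw K hK {r} isCompact_singleton).tendsto_at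
          (show ((r, y₀) : ℝ × Y) ∈ {r} ×ˢ K from ⟨rfl, hy₀⟩)
      exact le_of_tendsto (h1.dist h2)
        (Eventually.of_forall fun m => (hB _ w hw hwd).le)
    obtain ⟨δ, hδ, hBgδ⟩ := hBg (ε/6) (by positivity)
    have E1 := (Metric.tendstoUniformlyOn_iff.mp
      (hfw K hK (Icc (-1:ℝ) 1) isCompact_Icc)) (ε/6) (by positivity)
    obtain ⟨M1, hM1⟩ := eventually_atTop.mp E1
    have E2 : ∀ᶠ n in atTop, dist (y (n' n)) y₀ < δ :=
      (Metric.tendsto_nhds.mp hyl) δ hδ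
    have E3 : ∀ᶠ n in atTop, dist (g (τ n) y₀) (g 0 y₀) < ε/6 :=
      (Metric.tendsto_nhds.mp (((hgc y₀).tendsto 0).comp hτ0)) (ε/6) (by positivity)
    obtain ⟨n, hn2, hn3, hnM⟩ := (E2.and (E3.and (eventually_ge_atTop M1))).exists
    have hM := hM1 (ψ n) (hnM.trans hψ.le_apply)
    have hmem1 : ((0:ℝ), y (n' n)) ∈ Icc (-1:ℝ) 1 ×ˢ K :=
      ⟨⟨by norm_num, by norm_num⟩, hyK _⟩
    have hmemτ : ((τ n), y (n' n)) ∈ Icc (-1:ℝ) 1 ×ˢ K := by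
      refine ⟨abs_le.mp ?_, hyK _⟩
      have h1 := hτ1 n
      have h2 : (1:ℝ)/(n+1) ≤ 1 := by
        rw [div_le_one (by positivity)]
        linarith [Nat.cast_nonneg (α := ℝ) n]
      linarith
    have t1 := hM (0, y (n' n)) hmem1
    have t5 := hM (τ n, y (n' n)) hmemτ
    simp only [zero_add] at t1 t5
    have t2 := hBgδ 0 (y (n' n)) (hyK _) hn2
    have t4 := hBgδ (τ n) (y (n' n)) (hyK _) hn2
    have hge := hd (n' n)
    have hss : ss (n' n) = τ n + ts (n' n) := by rw [hτ]; ring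
    rw [hss] at hge
    have tri1 := dist_triangle4 (f (ts (n' n)) (y (n' n))) (g (τ n) y₀)
      (g (τ n) (y (n' n))) (f (τ n + ts (n' n)) (y (n' n)))
    have tri2 := dist_triangle4 (f (ts (n' n)) (y (n' n))) (g 0 (y (n' n)))
      (g 0 y₀) (g (τ n) y₀)
    rw [dist_comm] at t1
    have c3 : dist (g 0 y₀) (g (τ n) y₀) = dist (g (τ n) y₀) (g 0 y₀) := dist_comm _ _
    have c4 : dist (g (τ n) y₀) (g (τ n) (y (n' n)))
        = dist (g (τ n) (y (n' n))) (g (τ n) y₀) := dist_comm _ _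
    linarith [c3, c4]
  -- Combine the two claims
  rw [Metric.uniformContinuousOn_iff]
  intro ε hε
  obtain ⟨δA, hδA, hA⟩ := claimA (ε/2) (by positivity)
  have hcover : ∃ δ > 0, ∀ y ∈ K, ∀ z ∈ K, dist y z < δ → ∀ t : ℝ,
      dist (f t y) (f t z) < ε/2 := by
    choose δB hδBpos hB using fun i : K => claimB i i.2 (ε/4) (by positivity)
    obtain ⟨δ, hδ, hleb⟩ := lebesgue_number_lemma_of_metric hK
      (fun i : K => Metric.isOpen_ball (x := (i : Y)) (ε := δB i))
      (fun y hy => mem_iUnion.mpr ⟨⟨y, hy⟩, Metric.mem_ball_self (hδBpos _)⟩)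
    refine ⟨δ, hδ, fun y hy z hz hyz t => ?_⟩
    obtain ⟨i, hi⟩ := hleb y hy
    have h1 : dist y (i : Y) < δB i := hi (Metric.mem_ball_self hδ)
    have h2 : dist z (i : Y) < δB i := hi (Metric.mem_ball.mpr (by rwa [dist_comm]))
    calc dist (f t y) (f t z)
        ≤ dist (f t y) (f t (i : Y)) + dist (f t (i : Y)) (f t z) := dist_triangle _ _ _
      _ < ε/4 + ε/4 := by
          refine add_lt_add (hB i t y hy h1) ?_
          rw [dist_comm]
          exact hB i t z hz h2
      _ = ε/2 := by ring
  obtain ⟨δB, hδBpos, hB2⟩ := hcover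
  refine ⟨min δA δB, lt_min hδA hδBpos, fun p hp q hq hpq => ?_⟩
  have h1 : dist p.1 q.1 ≤ dist p q := by rw [Prod.dist_eq]; exact le_max_left _ _
  have h2 : dist p.2 q.2 ≤ dist p q := by rw [Prod.dist_eq]; exact le_max_right _ _
  calc dist (f p.1 p.2) (f q.1 q.2)
      ≤ dist (f p.1 p.2) (f q.1 p.2) + dist (f q.1 p.2) (f q.1 q.2) := dist_triangle _ _ _
    _ < ε/2 + ε/2 := by
        refine add_lt_add (hA p.1 q.1 ?_ p.2 hp.2) (hB2 p.2 hp.2 q.2 hq.2 ?_ q.1)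
        · exact lt_of_le_of_lt h1 (lt_of_lt_of_le hpq (min_le_left _ _))
        · exact lt_of_le_of_lt h2 (lt_of_lt_of_le hpq (min_le_right _ _))
    _ = ε := by ring
end

section
/- Let μ be a Borel measure on ℝ with μ(ℝ) = ∞ and μ(I) < ∞ for every bounded interval I. If f : ℝ → X is a bounded continuous function with values in a Banach space X such that lim_{r→∞} (1/μ([-r,r])) ∫_{[-r,r]} ‖f(t)‖ dμ(t) = 0, then there exists a sequence (t_n) in ℝ with |t_n| → ∞ and f(t_n) → 0. -/
open Filter Topology MeasureTheory Set

/-- If `f` is bounded continuous, Banach-valued and `μ`-ergodic (where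
`μ(ℝ) = ∞` and `μ` is finite on bounded intervals), then there is a sequence
`(tₙ)` with `|tₙ| → ∞` and `f tₙ → 0`. -/
theorem stmt_5 {X : Type*} [NormedAddCommGroup X] [NormedSpace ℝ X] [CompleteSpace X]
    (μ : Measure ℝ) (hμinf : μ Set.univ = ⊤)
    (hμbd : ∀ a b : ℝ, μ (Set.Icc a b) < ⊤)
    (f : ℝ → X) (hf : Continuous f) (hfb : ∃ C : ℝ, ∀ t, ‖f t‖ ≤ C)
    (herg : Tendsto (fun r : ℝ =>
        (μ (Set.Icc (-r) r)).toReal⁻¹ * ∫ t in Set.Icc (-r) r, ‖f t‖ ∂μ)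
      atTop (𝓝 0)) :
    ∃ t : ℕ → ℝ, Tendsto (fun n => |t n|) atTop atTop ∧
      Tendsto (fun n => f (t n)) atTop (𝓝 0) := by
  haveI : IsLocallyFiniteMeasure μ :=
    ⟨fun x => ⟨Icc (x - 1) (x + 1), Icc_mem_nhds (by linarith) (by linarith), hμbd _ _⟩⟩
  set m : ℝ → ℝ := fun r => (μ (Icc (-r) r)).toReal with hm_def
  have hmono : ∀ {r s : ℝ}, r ≤ s → Icc (-r) r ⊆ Icc (-s) s :=
    fun h => Icc_subset_Icc (by linarith) h
  -- μ (Icc (-n) n) → ⊤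
  have hUnion : (⋃ n : ℕ, Icc (-(n : ℝ)) n) = univ := by
    ext x
    simp only [mem_iUnion, mem_univ, iff_true, mem_Icc]
    have h : |x| ≤ (⌈|x|⌉₊ : ℝ) := Nat.le_ceil _
    exact ⟨⌈|x|⌉₊, (abs_le.mp h).1, (abs_le.mp h).2⟩
  have hμtop : Tendsto (fun n : ℕ => μ (Icc (-(n : ℝ)) n)) atTop (𝓝 ⊤) := by
    have := tendsto_measure_iUnion_atTop (μ := μ) (s := fun n : ℕ => Icc (-(n : ℝ)) n)
      (fun a b hab => hmono (by exact_mod_cast hab))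
    rwa [hUnion, hμinf] at this
  have hm_tendsto : Tendsto m atTop atTop := by
    rw [tendsto_atTop]
    intro M
    have hev : ∀ᶠ n : ℕ in atTop, ENNReal.ofReal M ≤ μ (Icc (-(n : ℝ)) n) :=
      hμtop.eventually (eventually_ge_nhds (by simp [ENNReal.ofReal_lt_top]))
    obtain ⟨n, hn⟩ := hev.exists
    filter_upwards [eventually_ge_atTop (n : ℝ)] with r hr
    have h1 : M ≤ m n := by
      rcases le_or_gt M 0 with hM | hM
      · exact hM.trans ENNReal.toReal_nonneg
      · have h0 := ENNReal.toReal_mono (hμbd (-(n:ℝ)) n).ne hn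
        rwa [ENNReal.toReal_ofReal hM.le] at h0
    have h2 : m n ≤ m r := ENNReal.toReal_mono (hμbd _ _).ne (measure_mono (hmono hr))
    linarith
  -- key claim
  have key : ∀ ε > (0:ℝ), ∀ R : ℝ, 0 ≤ R → ∃ t : ℝ, R ≤ |t| ∧ ‖f t‖ < ε := by
    intro ε hε R hR
    by_contra hcon
    push_neg at hcon
    -- hcon : ∀ t, R ≤ |t| → ε ≤ ‖f t‖
    set C0 := m R with hC0
    have hC0nn : 0 ≤ C0 := ENNReal.toReal_nonneg
    have hev : ∀ᶠ r in atTop, ε / 2 ≤ (μ (Icc (-r) r)).toReal⁻¹ * ∫ t in Icc (-r) r, ‖f t‖ ∂μ := by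
      filter_upwards [hm_tendsto.eventually_ge_atTop (max (2 * C0) 1),
        eventually_ge_atTop R] with r h1 h2
      have hmr1 : (1:ℝ) ≤ m r := le_trans (le_max_right _ _) h1
      have hmrC : 2 * C0 ≤ m r := le_trans (le_max_left _ _) h1
      have hmrpos : 0 < m r := by linarith
      have hμr_ne : μ (Icc (-r) r) ≠ ⊤ := (hμbd _ _).ne
      have hμR_ne : μ (Icc (-R) R) ≠ ⊤ := (hμbd _ _).ne
      have hsub : Icc (-R) R ⊆ Icc (-r) r := hmono h2
      have hIntOn : IntegrableOn (fun t => ‖f t‖) (Icc (-r) r) μ := hf.norm.integrableOn_Icc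
      -- lower bound on integral over difference
      have hmeasdiff : MeasurableSet (Icc (-r) r \ Icc (-R) R) :=
        measurableSet_Icc.diff measurableSet_Icc
      have hμdiff_ne : μ (Icc (-r) r \ Icc (-R) R) ≠ ⊤ :=
        ((measure_mono diff_subset).trans_lt (hμbd _ _)).ne
      have hIdiff : ε * (μ (Icc (-r) r \ Icc (-R) R)).toReal
          ≤ ∫ t in Icc (-r) r \ Icc (-R) R, ‖f t‖ ∂μ := by
        refine setIntegral_ge_of_const_le_real hmeasdiff hμdiff_ne ?_ (hIntOn.mono_set diff_subset)
        intro x hx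
        refine hcon x ?_
        rcases hx with ⟨hx1, hx2⟩
        rw [mem_Icc] at hx2
        push_neg at hx2
        rcases le_or_gt (-R) x with h | h
        · have := hx2 h
          calc R ≤ x := this.le
            _ ≤ |x| := le_abs_self x
        · calc R ≤ -x := by linarith
            _ ≤ |x| := neg_le_abs x
      have hμdiff_val : (μ (Icc (-r) r \ Icc (-R) R)).toReal = m r - C0 := by
        rw [measure_diff hsub measurableSet_Icc.nullMeasurableSet hμR_ne,
          ENNReal.toReal_sub_of_le (measure_mono hsub) hμr_ne]
      have hmono_int : ∫ t in Icc (-r) r \ Icc (-R) R, ‖f t‖ ∂μ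
          ≤ ∫ t in Icc (-r) r, ‖f t‖ ∂μ := by
        refine setIntegral_mono_set hIntOn ?_ (HasSubset.Subset.eventuallyLE diff_subset)
        exact Eventually.of_forall fun x => norm_nonneg _
      have hlow : ε * (m r - C0) ≤ ∫ t in Icc (-r) r, ‖f t‖ ∂μ := by
        rw [← hμdiff_val]; exact hIdiff.trans hmono_int
      have : ε / 2 * m r ≤ ε * (m r - C0) := by nlinarith
      calc ε / 2 = (m r)⁻¹ * (ε / 2 * m r) := by field_simp
        _ ≤ (m r)⁻¹ * ∫ t in Icc (-r) r, ‖f t‖ ∂μ := by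
            apply mul_le_mul_of_nonneg_left (this.trans hlow) (by positivity)
    have := ge_of_tendsto herg hev
    linarith
  have hsel : ∀ n : ℕ, ∃ t : ℝ, (n : ℝ) ≤ |t| ∧ ‖f t‖ < 1 / (n + 1) :=
    fun n => key (1 / (n + 1)) (by positivity) n (Nat.cast_nonneg n)
  choose t ht1 ht2 using hsel
  refine ⟨t, ?_, ?_⟩
  · exact tendsto_atTop_mono ht1 tendsto_natCast_atTop_atTop
  · rw [tendsto_zero_iff_norm_tendsto_zero]
    exact squeeze_zero (fun n => norm_nonneg _) (fun n => (ht2 n).le)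
      tendsto_one_div_add_atTop_nhds_zero_nat
end

section
/- Let μ be a Borel measure on ℝ with μ(ℝ) = ∞, finite on bounded intervals, and satisfying liminf_{r→∞} μ([0,r]) / μ([-r,r]) > 0. If f : ℝ → X is bounded continuous and μ-ergodic (i.e., (1/μ([-r,r])) ∫_{[-r,r]} ‖f(t)‖ dμ(t) → 0), then there exists a sequence (t_n) converging to +∞ with f(t_n) → 0. -/
open Filter Topology MeasureTheory Set

/-- If moreover `liminf μ([0,r])/μ([-r,r]) > 0`, the sequence can be chosen
converging to `+∞`. -/
theorem stmt_6 {X : Type*} [NormedAddCommGroup X] [NormedSpace ℝ X] [CompleteSpace X]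
    (μ : Measure ℝ) (hμinf : μ Set.univ = ⊤)
    (hμbd : ∀ a b : ℝ, μ (Set.Icc a b) < ⊤)
    (hliminf : 0 < Filter.liminf
      (fun r : ℝ => (μ (Set.Icc 0 r)).toReal / (μ (Set.Icc (-r) r)).toReal) atTop)
    (f : ℝ → X) (hf : Continuous f) (hfb : ∃ C : ℝ, ∀ t, ‖f t‖ ≤ C)
    (herg : Tendsto (fun r : ℝ =>
        (μ (Set.Icc (-r) r)).toReal⁻¹ * ∫ t in Set.Icc (-r) r, ‖f t‖ ∂μ)
      atTop (𝓝 0)) :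
    ∃ t : ℕ → ℝ, Tendsto t atTop atTop ∧
      Tendsto (fun n => f (t n)) atTop (𝓝 0) := by
  obtain ⟨C, hC⟩ := hfb
  have mfin : ∀ r : ℝ, μ (Set.Icc (-r) r) ≠ ⊤ := fun r => (hμbd _ _).ne
  -- the norm is integrable on every compact interval
  have hint : ∀ a b : ℝ, IntegrableOn (fun t => ‖f t‖) (Set.Icc a b) μ := by
    intro a b
    have : IsFiniteMeasure (μ.restrict (Set.Icc a b)) :=
      ⟨by rw [Measure.restrict_apply_univ]; exact hμbd a b⟩
    refine Integrable.mono' (integrable_const C) hf.norm.aestronglyMeasurable ?_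
    exact Filter.Eventually.of_forall fun t => by simpa using hC t
  -- total mass of `[-r, r]` tends to infinity
  have mtop : Tendsto (fun r : ℝ => (μ (Set.Icc (-r) r)).toReal) atTop atTop := by
    rw [tendsto_atTop]
    intro M
    have hmono : Monotone (fun n : ℕ => Set.Icc (-(n : ℝ)) n) := fun a b hab =>
      Set.Icc_subset_Icc (neg_le_neg (Nat.cast_le.2 hab)) (Nat.cast_le.2 hab)
    have hU : (⋃ n : ℕ, Set.Icc (-(n : ℝ)) n) = Set.univ := by
      ext x
      simp only [Set.mem_iUnion, Set.mem_univ, iff_true, Set.mem_Icc]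
      obtain ⟨n, hn⟩ := exists_nat_ge |x|
      exact ⟨n, (abs_le.1 hn).1, (abs_le.1 hn).2⟩
    have ht := tendsto_measure_iUnion_atTop (μ := μ) hmono
    rw [hU, hμinf] at ht
    have hev : ∀ᶠ n : ℕ in atTop, ENNReal.ofReal M < μ (Set.Icc (-(n : ℝ)) n) :=
      ht.eventually (lt_mem_nhds (ENNReal.ofReal_lt_top))
    obtain ⟨n, hn⟩ := hev.exists
    filter_upwards [eventually_ge_atTop (n : ℝ)] with r hr
    have h1 : μ (Set.Icc (-(n : ℝ)) n) ≤ μ (Set.Icc (-r) r) :=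
      measure_mono (Set.Icc_subset_Icc (neg_le_neg hr) hr)
    have h2 := hn.le.trans h1
    rwa [ENNReal.ofReal_le_iff_le_toReal (mfin r)] at h2
  -- key step: far out, the function gets arbitrarily small
  have key : ∀ ε : ℝ, 0 < ε → ∀ A : ℝ, ∃ t, A ≤ t ∧ ‖f t‖ < ε := by
    intro ε hε A
    by_contra hcon
    push_neg at hcon
    set B := max A 0 with hBdef
    have hB0 : (0 : ℝ) ≤ B := le_max_right _ _
    have hcon' : ∀ t, B ≤ t → ε ≤ ‖f t‖ := fun t ht =>
      hcon t ((le_max_left _ _).trans ht)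
    obtain ⟨c, hc0, hc⟩ := exists_between hliminf
    have hbd : IsBoundedUnder (· ≥ ·) atTop
        (fun r : ℝ => (μ (Set.Icc 0 r)).toReal / (μ (Set.Icc (-r) r)).toReal) :=
      isBoundedUnder_of ⟨0, fun r => div_nonneg ENNReal.toReal_nonneg ENNReal.toReal_nonneg⟩
    have hev1 := eventually_lt_of_lt_liminf hc hbd
    have hev2 : ∀ᶠ r : ℝ in atTop,
        (2 / c) * (μ (Set.Icc 0 B)).toReal ≤ (μ (Set.Icc (-r) r)).toReal :=
      mtop.eventually_ge_atTop _
    have hev3 : ∀ᶠ r : ℝ in atTop, 0 < (μ (Set.Icc (-r) r)).toReal :=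
      mtop.eventually_gt_atTop 0
    have hev4 : ∀ᶠ r : ℝ in atTop, B ≤ r := eventually_ge_atTop B
    have hev5 : ∀ᶠ r : ℝ in atTop,
        (μ (Set.Icc (-r) r)).toReal⁻¹ * ∫ t in Set.Icc (-r) r, ‖f t‖ ∂μ < ε * c / 2 :=
      herg.eventually (gt_mem_nhds (by positivity))
    obtain ⟨r, h1, h2, h3, h4, h5⟩ :=
      (hev1.and (hev2.and (hev3.and (hev4.and hev5)))).exists
    set m : ℝ := (μ (Set.Icc (-r) r)).toReal with hmdef
    have hr0 : (0 : ℝ) ≤ r := hB0.trans h4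
    have hnegr : -r ≤ B := le_trans (neg_nonpos.2 hr0) hB0
    -- μ([0,r]) > c * m
    have hA1 : c * m < (μ (Set.Icc 0 r)).toReal := by
      rw [lt_div_iff₀ h3] at h1; exact h1
    -- subadditivity
    have hA2 : (μ (Set.Icc 0 r)).toReal ≤
        (μ (Set.Icc 0 B)).toReal + (μ (Set.Icc B r)).toReal := by
      have hsub : Set.Icc 0 r ⊆ Set.Icc 0 B ∪ Set.Icc B r := by
        intro x hx
        rcases le_total x B with h | h
        · exact Or.inl ⟨hx.1, h⟩
        · exact Or.inr ⟨h, hx.2⟩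
      have hle : μ (Set.Icc 0 r) ≤ μ (Set.Icc 0 B) + μ (Set.Icc B r) :=
        (measure_mono hsub).trans (measure_union_le _ _)
      have := ENNReal.toReal_mono
        (by exact ENNReal.add_ne_top.2 ⟨(hμbd 0 B).ne, (hμbd B r).ne⟩) hle
      rwa [ENNReal.toReal_add (hμbd 0 B).ne (hμbd B r).ne] at this
    -- μ([0,B]) ≤ (c/2) * m
    have hA3 : (μ (Set.Icc 0 B)).toReal ≤ (c / 2) * m := by
      have heq : (μ (Set.Icc 0 B)).toReal
          = (c / 2) * ((2 / c) * (μ (Set.Icc 0 B)).toReal) := by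
        field_simp
      rw [heq]
      exact mul_le_mul_of_nonneg_left h2 (by positivity)
    have hA4 : (c / 2) * m ≤ (μ (Set.Icc B r)).toReal := by linarith
    -- lower bound on the integral
    have hI1 : ε * (μ (Set.Icc B r)).toReal ≤ ∫ t in Set.Icc B r, ‖f t‖ ∂μ :=
      by have := setIntegral_ge_of_const_le_real measurableSet_Icc (hμbd B r).ne
          (fun x hx => hcon' x hx.1) (hint B r)
         simpa [Measure.real, mul_comm, smul_eq_mul] using this
    have hI2 : (∫ t in Set.Icc B r, ‖f t‖ ∂μ) ≤ ∫ t in Set.Icc (-r) r, ‖f t‖ ∂μ :=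
      setIntegral_mono_set (hint (-r) r)
        (Filter.Eventually.of_forall fun t => norm_nonneg _)
        ((Set.Icc_subset_Icc hnegr le_rfl).eventuallyLE)
    have hI3 : ε * ((c / 2) * m) ≤ ∫ t in Set.Icc (-r) r, ‖f t‖ ∂μ := by
      have := mul_le_mul_of_nonneg_left hA4 hε.le
      linarith
    have hm0 : m ≠ 0 := h3.ne'
    have hfinal : ε * c / 2 ≤ m⁻¹ * ∫ t in Set.Icc (-r) r, ‖f t‖ ∂μ := by
      have h6 := mul_le_mul_of_nonneg_left hI3 (inv_nonneg.2 h3.le)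
      have h7 : m⁻¹ * (ε * ((c / 2) * m)) = ε * c / 2 := by
        field_simp
      linarith
    linarith
  -- build the sequence
  choose t ht1 ht2 using fun n : ℕ => key (1 / (n + 1)) (by positivity) n
  refine ⟨t, tendsto_atTop_mono ht1 tendsto_natCast_atTop_atTop, ?_⟩
  rw [tendsto_zero_iff_norm_tendsto_zero]
  exact squeeze_zero (fun n => norm_nonneg _) (fun n => (ht2 n).le)
    tendsto_one_div_add_atTop_nhds_zero_nat
end

section
/- Let μ be a Borel measure on ℝ with μ(ℝ) = ∞ and finite on bounded intervals, let X be a Banach space, and let f : ℝ → X be bounded continuous. Then (1/μ([-r,r])) ∫_{[-r,r]} ‖f(t)‖ dμ(t) → 0 as r → ∞ if and only if for every ε > 0, μ{t ∈ [-r,r] : ‖f(t)‖ > ε} / μ([-r,r]) → 0 as r → ∞. -/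
open Filter Topology MeasureTheory Set

/-- For a bounded continuous Banach-valued `f`, `μ`-ergodicity of `‖f‖` is
equivalent to `μ{t ∈ [-r,r] : ‖f t‖ > ε}/μ([-r,r]) → 0` for every `ε > 0`. -/
theorem stmt_7 {X : Type*} [NormedAddCommGroup X] [NormedSpace ℝ X] [CompleteSpace X]
    (μ : Measure ℝ) (hμinf : μ Set.univ = ⊤)
    (hμbd : ∀ a b : ℝ, μ (Set.Icc a b) < ⊤)
    (f : ℝ → X) (hf : Continuous f) (hfb : ∃ C : ℝ, ∀ t, ‖f t‖ ≤ C) :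
    Tendsto (fun r : ℝ =>
        (μ (Set.Icc (-r) r)).toReal⁻¹ * ∫ t in Set.Icc (-r) r, ‖f t‖ ∂μ)
      atTop (𝓝 0) ↔
    ∀ ε : ℝ, 0 < ε →
      Tendsto (fun r : ℝ =>
          (μ {t ∈ Set.Icc (-r) r | ε < ‖f t‖}).toReal / (μ (Set.Icc (-r) r)).toReal)
        atTop (𝓝 0) := by
  obtain ⟨C, hC⟩ := hfb
  have hC0 : 0 ≤ C := le_trans (norm_nonneg (f 0)) (hC 0)
  have hSmeas : ∀ ε r : ℝ, MeasurableSet {t ∈ Set.Icc (-r) r | ε < ‖f t‖} :=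
    fun ε r => measurableSet_Icc.inter
      (measurableSet_lt measurable_const hf.norm.measurable)
  have hSfin : ∀ ε r : ℝ, μ {t ∈ Set.Icc (-r) r | ε < ‖f t‖} < ⊤ :=
    fun ε r => lt_of_le_of_lt (measure_mono (sep_subset _ _)) (hμbd _ _)
  have hint : ∀ r : ℝ, IntegrableOn (fun t => ‖f t‖) (Set.Icc (-r) r) μ := by
    intro r
    have : IsFiniteMeasure (μ.restrict (Set.Icc (-r) r)) := by
      constructor
      rw [Measure.restrict_apply_univ]
      exact hμbd _ _
    exact Integrable.mono' (integrable_const C) hf.norm.aestronglyMeasurable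
      (Filter.Eventually.of_forall fun t => by simpa using hC t)
  have hInonneg : ∀ r : ℝ, 0 ≤ ∫ t in Set.Icc (-r) r, ‖f t‖ ∂μ :=
    fun r => setIntegral_nonneg measurableSet_Icc fun t _ => norm_nonneg _
  have hpos : ∀ᶠ r in atTop, 0 < (μ (Set.Icc (-r) r)).toReal := by
    obtain ⟨n, hn⟩ : ∃ n : ℕ, 0 < μ (Set.Icc (-(n : ℝ)) n) := by
      by_contra h
      push_neg at h
      have h0 : ∀ n : ℕ, μ (Set.Icc (-(n : ℝ)) n) = 0 :=
        fun n => le_antisymm (h n) zero_le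
      have huniv : (Set.univ : Set ℝ) = ⋃ n : ℕ, Set.Icc (-(n : ℝ)) n := by
        ext x
        simp only [mem_univ, mem_iUnion, mem_Icc, true_iff]
        obtain ⟨n, hn⟩ := exists_nat_gt |x|
        obtain ⟨h1, h2⟩ := abs_le.mp hn.le
        exact ⟨n, h1, h2⟩
      have : μ Set.univ = 0 := by
        rw [huniv]
        refine le_antisymm (le_trans (measure_iUnion_le _) ?_) zero_le
        simp [h0]
      rw [this] at hμinf
      simp at hμinf
    filter_upwards [eventually_ge_atTop (n : ℝ)] with r hr
    have hnn : (0 : ℝ) ≤ n := Nat.cast_nonneg n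
    have : 0 < μ (Set.Icc (-r) r) :=
      lt_of_lt_of_le hn (measure_mono (Set.Icc_subset_Icc (by linarith) hr))
    exact ENNReal.toReal_pos this.ne' (hμbd _ _).ne
  constructor
  · -- Markov inequality direction
    intro h ε hε
    have hg : Tendsto (fun r : ℝ => ε⁻¹ *
        ((μ (Set.Icc (-r) r)).toReal⁻¹ * ∫ t in Set.Icc (-r) r, ‖f t‖ ∂μ))
        atTop (𝓝 0) := by
      simpa using h.const_mul ε⁻¹
    refine squeeze_zero' (Filter.Eventually.of_forall fun r =>
      div_nonneg ENNReal.toReal_nonneg ENNReal.toReal_nonneg) ?_ hg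
    filter_upwards [hpos] with r hM
    set S := {t ∈ Set.Icc (-r) r | ε < ‖f t‖} with hSdef
    set m := (μ (Set.Icc (-r) r)).toReal with hm
    set I := ∫ t in Set.Icc (-r) r, ‖f t‖ ∂μ with hI
    have hintS : IntegrableOn (fun t => ‖f t‖) S μ :=
      (hint r).mono_set (sep_subset _ _)
    have key : ε * (μ S).toReal ≤ I := by
      have h1 : ∫ _ in S, ε ∂μ ≤ ∫ t in S, ‖f t‖ ∂μ := by
        refine setIntegral_mono_on ((integrableOn_const_iff).mpr (Or.inr (hSfin ε r)))
          hintS (hSmeas ε r) fun t ht => le_of_lt ht.2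
      have h2 : ∫ t in S, ‖f t‖ ∂μ ≤ I :=
        setIntegral_mono_set (hint r)
          (Filter.Eventually.of_forall fun t => norm_nonneg _)
          (HasSubset.Subset.eventuallyLE (sep_subset _ _))
      have h3 : ∫ _ in S, ε ∂μ = (μ S).toReal * ε := by
        rw [setIntegral_const]; simp [smul_eq_mul, Measure.real]
      calc ε * (μ S).toReal = ∫ _ in S, ε ∂μ := by rw [h3]; ring
        _ ≤ ∫ t in S, ‖f t‖ ∂μ := h1
        _ ≤ I := h2
    have hS' : (μ S).toReal ≤ ε⁻¹ * I := by
      rw [← div_eq_inv_mul, le_div_iff₀ hε]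
      linarith [key]
    calc (μ S).toReal / m ≤ (ε⁻¹ * I) / m := by
          exact div_le_div_of_nonneg_right hS' hM.le
      _ = ε⁻¹ * (m⁻¹ * I) := by rw [div_eq_mul_inv]; ring
  · -- converse direction
    intro h
    rw [Metric.tendsto_nhds]
    intro δ hδ
    have hδ2 : 0 < δ / 2 := half_pos hδ
    have htail : ∀ᶠ r in atTop,
        C * ((μ {t ∈ Set.Icc (-r) r | δ/2 < ‖f t‖}).toReal /
          (μ (Set.Icc (-r) r)).toReal) < δ / 2 := by
      have := (h (δ/2) hδ2).const_mul C
      rw [mul_zero] at this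
      exact this.eventually (gt_mem_nhds hδ2)
    filter_upwards [hpos, htail] with r hM hr2
    set S := {t ∈ Set.Icc (-r) r | δ/2 < ‖f t‖} with hSdef
    set m := (μ (Set.Icc (-r) r)).toReal with hm
    set s := (μ S).toReal with hs
    set I := ∫ t in Set.Icc (-r) r, ‖f t‖ ∂μ with hI
    have havg_nonneg : 0 ≤ m⁻¹ * I :=
      mul_nonneg (inv_nonneg.mpr ENNReal.toReal_nonneg) (hInonneg r)
    rw [Real.dist_eq, sub_zero, abs_of_nonneg havg_nonneg]
    -- split the integral
    have hSsub : S ⊆ Set.Icc (-r) r := sep_subset _ _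
    have hintS : IntegrableOn (fun t => ‖f t‖) S μ := (hint r).mono_set hSsub
    have hintD : IntegrableOn (fun t => ‖f t‖) (Set.Icc (-r) r \ S) μ :=
      (hint r).mono_set diff_subset
    have hsplit : I = (∫ t in S, ‖f t‖ ∂μ) + ∫ t in Set.Icc (-r) r \ S, ‖f t‖ ∂μ := by
      rw [hI, ← setIntegral_union disjoint_sdiff_right
        (measurableSet_Icc.diff (hSmeas _ _)) hintS hintD,
        union_diff_cancel hSsub]
    have hb1 : ∫ t in S, ‖f t‖ ∂μ ≤ s * C := by
      have := setIntegral_mono_on hintS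
        ((integrableOn_const_iff).mpr (Or.inr (hSfin _ _))) (hSmeas _ _)
        (fun t _ => hC t)
      rwa [setIntegral_const, smul_eq_mul] at this
    have hb2 : ∫ t in Set.Icc (-r) r \ S, ‖f t‖ ∂μ ≤ δ/2 * m := by
      have hfinD : μ (Set.Icc (-r) r \ S) < ⊤ :=
        lt_of_le_of_lt (measure_mono diff_subset) (hμbd _ _)
      have h1 : ∫ t in Set.Icc (-r) r \ S, ‖f t‖ ∂μ ≤
          ∫ _ in Set.Icc (-r) r \ S, δ/2 ∂μ := by
        refine setIntegral_mono_on hintD ((integrableOn_const_iff).mpr (Or.inr hfinD))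
          (measurableSet_Icc.diff (hSmeas _ _)) fun t ht => ?_
        by_contra hcon
        push_neg at hcon
        exact ht.2 ⟨ht.1, hcon⟩
      have h2 : ∫ _ in Set.Icc (-r) r \ S, δ/2 ∂μ =
          (μ (Set.Icc (-r) r \ S)).toReal * (δ/2) := by
        rw [setIntegral_const, smul_eq_mul, Measure.real]
      have h3 : (μ (Set.Icc (-r) r \ S)).toReal ≤ m :=
        ENNReal.toReal_mono (hμbd _ _).ne (measure_mono diff_subset)
      calc ∫ t in Set.Icc (-r) r \ S, ‖f t‖ ∂μ ≤
            (μ (Set.Icc (-r) r \ S)).toReal * (δ/2) := h1.trans h2.le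
        _ ≤ m * (δ/2) := by
            exact mul_le_mul_of_nonneg_right h3 hδ2.le
        _ = δ/2 * m := mul_comm _ _
    have hCs : C * s < δ/2 * m := by
      have : C * s / m < δ / 2 := by rwa [mul_div_assoc]
      calc C * s = (C * s / m) * m := by field_simp
        _ < (δ/2) * m := by exact mul_lt_mul_of_pos_right this hM
    rw [← div_eq_inv_mul, div_lt_iff₀ hM]
    calc I ≤ s * C + δ/2 * m := by linarith [hsplit, hb1, hb2]
      _ < δ/2 * m + δ/2 * m := by linarith [hCs, mul_comm s C]
      _ = δ * m := by ring
end

section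
/- Suppose f : ℝ × Y → X satisfies: for each x ∈ Y, f(·, x) is μ-ergodic (bounded continuous with (1/μ([-r,r])) ∫_{[-r,r]} ‖f(t,x)‖ dμ(t) → 0), and f(t, x) is continuous in x uniformly with respect to t ∈ ℝ. Then for every compact subset K of Y, sup_{x ∈ K} (1/μ([-r,r])) ∫_{[-r,r]} ‖f(t,x)‖ dμ(t) → 0 as r → ∞. -/
open Filter Topology MeasureTheory Set

/-- If `f(·,x)` is `μ`-ergodic for each `x` and `f(t,x)` is continuous in `x`
uniformly in `t`, then the ergodicity is uniform on compact subsets of `Y`. -/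
theorem stmt_8 {Y X : Type*} [MetricSpace Y] [NormedAddCommGroup X]
    [NormedSpace ℝ X] [CompleteSpace X]
    (μ : Measure ℝ) (hμinf : μ Set.univ = ⊤)
    (hμbd : ∀ a b : ℝ, μ (Set.Icc a b) < ⊤)
    (f : ℝ → Y → X)
    (hcont : ∀ x : Y, Continuous (fun t => f t x))
    (hbdd : ∀ x : Y, ∃ C : ℝ, ∀ t, ‖f t x‖ ≤ C)
    (herg : ∀ x : Y, Tendsto (fun r : ℝ =>
        (μ (Set.Icc (-r) r)).toReal⁻¹ * ∫ t in Set.Icc (-r) r, ‖f t x‖ ∂μ)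
      atTop (𝓝 0))
    (hunif : ∀ x : Y, ∀ ε : ℝ, 0 < ε → ∃ η : ℝ, 0 < η ∧
      ∀ y : Y, dist x y < η → ∀ t : ℝ, ‖f t x - f t y‖ < ε) :
    ∀ K : Set Y, IsCompact K → ∀ ε : ℝ, 0 < ε → ∃ R : ℝ, ∀ r : ℝ, R ≤ r →
      ∀ x ∈ K,
        (μ (Set.Icc (-r) r)).toReal⁻¹ * ∫ t in Set.Icc (-r) r, ‖f t x‖ ∂μ < ε := by
  classical
  intro K hK ε hε
  choose η hη hηspec using fun x => hunif x (ε/2) (half_pos hε)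
  obtain ⟨s, hs_sub, hs_cover⟩ := hK.elim_nhds_subcover (fun x => Metric.ball x (η x))
    (fun x _ => Metric.ball_mem_nhds x (hη x))
  have hR : ∀ x : Y, ∃ R : ℝ, ∀ r : ℝ, R ≤ r →
      (μ (Set.Icc (-r) r)).toReal⁻¹ * ∫ t in Set.Icc (-r) r, ‖f t x‖ ∂μ < ε/2 := by
    intro x
    have h := (Tendsto.eventually_lt_const (half_pos hε) (herg x))
    exact eventually_atTop.1 h
  choose R hRspec using hR
  obtain ⟨M, hM⟩ := (s.image R).exists_le
  refine ⟨M, ?_⟩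
  intro r hr x hx
  obtain ⟨c, hcs, hxc⟩ : ∃ c ∈ s, x ∈ Metric.ball c (η c) := by
    simpa using hs_cover hx
  have hRc : R c ≤ M := hM _ (Finset.mem_image_of_mem R hcs)
  have hc2 : (μ (Set.Icc (-r) r)).toReal⁻¹ * ∫ t in Set.Icc (-r) r, ‖f t c‖ ∂μ < ε/2 :=
    hRspec c r (hRc.trans hr)
  set I := Set.Icc (-r) r with hI
  set m := (μ I).toReal with hm
  have hm0 : 0 ≤ m := ENNReal.toReal_nonneg
  have hint : ∀ y : Y, IntegrableOn (fun t => ‖f t y‖) I μ := by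
    intro y
    obtain ⟨C, hC⟩ := hbdd y
    refine Integrable.mono' (g := fun _ => C) ?_ ?_ ?_
    · exact integrableOn_const (hμbd _ _).ne
    · exact ((hcont y).norm).aestronglyMeasurable
    · filter_upwards with t using by simpa using hC t
  have hptwise : ∀ t ∈ I, ‖f t x‖ ≤ ‖f t c‖ + ε/2 := by
    intro t _
    have h1 : ‖f t c - f t x‖ < ε/2 := hηspec c x (by simpa [dist_comm] using hxc) t
    have h2 : ‖f t x‖ - ‖f t c‖ ≤ ‖f t x - f t c‖ := norm_sub_norm_le _ _
    rw [norm_sub_rev] at h2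
    linarith
  have hmono : (∫ t in I, ‖f t x‖ ∂μ) ≤ ∫ t in I, (‖f t c‖ + ε/2) ∂μ := by
    refine setIntegral_mono_on (hint x) ?_ measurableSet_Icc hptwise
    exact (hint c).add (integrableOn_const (hμbd _ _).ne)
  have hadd : (∫ t in I, (‖f t c‖ + ε/2) ∂μ) = (∫ t in I, ‖f t c‖ ∂μ) + (ε/2) * m := by
    rw [integral_add (hint c) (integrableOn_const (hμbd _ _).ne)]
    simp [setIntegral_const, hm, mul_comm, Measure.real]
  have hinv : m⁻¹ * m ≤ 1 := by
    rcases eq_or_ne m 0 with h | h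
    · simp [h]
    · rw [inv_mul_cancel₀ h]
  calc m⁻¹ * ∫ t in I, ‖f t x‖ ∂μ
      ≤ m⁻¹ * ∫ t in I, (‖f t c‖ + ε/2) ∂μ :=
        mul_le_mul_of_nonneg_left hmono (inv_nonneg.2 hm0)
    _ = m⁻¹ * ∫ t in I, ‖f t c‖ ∂μ + (ε/2) * (m⁻¹ * m) := by rw [hadd]; ring
    _ ≤ m⁻¹ * ∫ t in I, ‖f t c‖ ∂μ + (ε/2) * 1 :=
        add_le_add_right (mul_le_mul_of_nonneg_left hinv (half_pos hε).le) _
    _ < ε := by rw [mul_one]; linarith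
end

section
/- Let X be a metric space with distance d, μ a Borel measure on ℝ with μ(ℝ) = ∞ and finite on bounded intervals, and f, g : ℝ → X continuous with g almost automorphic. Then (1/μ([-r,r])) ∫_{[-r,r]} (d(f(t),g(t)) ∧ 1) dμ(t) → 0 if and only if for every finite open cover U_1,…,U_m of the (compact) closure K of the range of g, setting V = ∪_i (U_i × U_i), one has μ{t ∈ [-r,r] : (f(t), g(t)) ∉ V} / μ([-r,r]) → 0 as r → ∞. -/
open Filter Topology MeasureTheory Set

/-- `f : ℝ → X` is almost automorphic. -/
def IsAlmostAutomorphic {X : Type*} [TopologicalSpace X] (f : ℝ → X) : Prop :=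
  ∀ t' : ℕ → ℝ, ∃ φ : ℕ → ℕ, StrictMono φ ∧ ∃ g : ℝ → X,
    (∀ t : ℝ, Tendsto (fun n => f (t + t' (φ n))) atTop (𝓝 (g t))) ∧
    (∀ t : ℝ, Tendsto (fun n => g (t - t' (φ n))) atTop (𝓝 (f t)))

/-- The closure of the range of an almost automorphic function is compact. -/
lemma aux_compact_closure_range {X : Type*} [MetricSpace X] {g : ℝ → X}
    (hgaa : IsAlmostAutomorphic g) : IsCompact (closure (Set.range g)) := by
  apply IsSeqCompact.isCompact
  intro x hx
  have h : ∀ n : ℕ, ∃ t : ℝ, dist (x n) (g t) < 1 / (n + 1) := by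
    intro n
    have hxn := hx n
    rw [Metric.mem_closure_iff] at hxn
    obtain ⟨y, ⟨t, rfl⟩, hy⟩ := hxn (1 / (n + 1)) (by positivity)
    exact ⟨t, hy⟩
  choose t ht using h
  obtain ⟨φ, hφ, G, hG, -⟩ := hgaa t
  have h0 := hG 0
  refine ⟨G 0, ?_, φ, hφ, ?_⟩
  · exact mem_closure_of_tendsto h0 (Filter.Eventually.of_forall fun n => ⟨0 + t (φ n), rfl⟩)
  · have hdist : Tendsto (fun n => dist (x (φ n)) (G 0)) atTop (𝓝 0) := by
      apply squeeze_zero (g := fun n => 1 / (n + 1) + dist (g (0 + t (φ n))) (G 0))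
        (fun n => dist_nonneg)
      · intro n
        have h1 : dist (x (φ n)) (G 0) ≤ dist (x (φ n)) (g (t (φ n))) + dist (g (t (φ n))) (G 0) :=
          dist_triangle _ _ _
        have h2 : dist (x (φ n)) (g (t (φ n))) ≤ 1 / (n + 1) := by
          have h3 := ht (φ n)
          have h5 : (n : ℝ) ≤ (φ n : ℝ) := Nat.cast_le.mpr hφ.le_apply
          have h4 : (1 : ℝ) / (φ n + 1) ≤ 1 / (n + 1) := by
            apply one_div_le_one_div_of_le (by positivity)
            linarith
          linarith
        simp only [zero_add]
        linarith
      · have ha : Tendsto (fun n : ℕ => 1 / ((n : ℝ) + 1)) atTop (𝓝 0) :=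
          tendsto_one_div_add_atTop_nhds_zero_nat
        have hb : Tendsto (fun n => dist (g (0 + t (φ n))) (G 0)) atTop (𝓝 0) :=
          tendsto_iff_dist_tendsto_zero.mp h0
        simpa using ha.add hb
    exact tendsto_iff_dist_tendsto_zero.mpr (by simpa using hdist)

/-- Topological characterization of `μ`-pseudo almost automorphy in the wide
sense: the metric condition is equivalent to the finite-open-cover one. -/
theorem stmt_9 {X : Type*} [MetricSpace X]
    (μ : Measure ℝ) (hμinf : μ Set.univ = ⊤)
    (hμbd : ∀ a b : ℝ, μ (Set.Icc a b) < ⊤)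
    (f g : ℝ → X) (hf : Continuous f) (hg : Continuous g)
    (hgaa : IsAlmostAutomorphic g) :
    Tendsto (fun r : ℝ => (μ (Set.Icc (-r) r)).toReal⁻¹ *
        ∫ t in Set.Icc (-r) r, min (dist (f t) (g t)) 1 ∂μ) atTop (𝓝 0) ↔
    ∀ (m : ℕ) (U : Fin m → Set X), (∀ i, IsOpen (U i)) →
      closure (Set.range g) ⊆ ⋃ i, U i →
      Tendsto (fun r : ℝ =>
        (μ {t ∈ Set.Icc (-r) r | (f t, g t) ∉ ⋃ i, (U i) ×ˢ (U i)}).toReal /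
          (μ (Set.Icc (-r) r)).toReal) atTop (𝓝 0) := by
  have hK : IsCompact (closure (Set.range g)) := aux_compact_closure_range hgaa
  -- basic facts
  have hfin : ∀ r : ℝ, IsFiniteMeasure (μ.restrict (Set.Icc (-r) r)) := fun r =>
    ⟨by rw [Measure.restrict_apply_univ]; exact hμbd _ _⟩
  have hint : ∀ r : ℝ, IntegrableOn (fun t => min (dist (f t) (g t)) 1) (Set.Icc (-r) r) μ := by
    intro r
    haveI := hfin r
    apply Integrable.mono' (integrable_const (1 : ℝ))
    · exact (((hf.dist hg).min continuous_const)).aestronglyMeasurable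
    · filter_upwards with t
      rw [Real.norm_eq_abs, abs_of_nonneg (le_min dist_nonneg zero_le_one)]
      exact min_le_right _ _
  have hintnn : ∀ r : ℝ, 0 ≤ ∫ t in Set.Icc (-r) r, min (dist (f t) (g t)) 1 ∂μ := fun r =>
    integral_nonneg fun t => le_min dist_nonneg zero_le_one
  have hpos : ∀ᶠ r in atTop, 0 < (μ (Set.Icc (-r) r)).toReal := by
    have hex : ∃ n : ℕ, 0 < μ (Set.Icc (-(n : ℝ)) n) := by
      by_contra h
      push_neg at h
      have huniv : (Set.univ : Set ℝ) ⊆ ⋃ n : ℕ, Set.Icc (-(n : ℝ)) n := by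
        intro x _
        simp only [Set.mem_iUnion, Set.mem_Icc]
        have h1 : |x| ≤ (⌈|x|⌉₊ : ℝ) := Nat.le_ceil _
        obtain ⟨h2, h3⟩ := abs_le.mp h1
        exact ⟨⌈|x|⌉₊, h2, h3⟩
      have : μ Set.univ = 0 := by
        refine le_antisymm ((measure_mono huniv).trans ?_) bot_le
        refine (measure_iUnion_le _).trans ?_
        simp [fun n => le_antisymm (h n) bot_le]
      rw [this] at hμinf
      simp at hμinf
    obtain ⟨n, hn⟩ := hex
    filter_upwards [eventually_ge_atTop (n : ℝ)] with r hr
    have hsub : Set.Icc (-(n : ℝ)) n ⊆ Set.Icc (-r) r := Set.Icc_subset_Icc (by linarith) hr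
    exact ENNReal.toReal_pos (lt_of_lt_of_le hn (measure_mono hsub)).ne' (hμbd _ _).ne
  constructor
  · -- metric ⟹ cover
    intro hmean m U hU hcov
    obtain ⟨δ, hδ, hball⟩ := lebesgue_number_lemma_of_metric hK hU hcov
    set c := min δ 1 with hc
    have hc0 : 0 < c := lt_min hδ one_pos
    have hpt : ∀ t, (f t, g t) ∉ (⋃ i, (U i) ×ˢ (U i)) → c ≤ min (dist (f t) (g t)) 1 := by
      intro t hbad
      have hδle : δ ≤ dist (f t) (g t) := by
        by_contra hlt
        push_neg at hlt
        obtain ⟨i, hi⟩ := hball (g t) (subset_closure ⟨t, rfl⟩)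
        exact hbad (Set.mem_iUnion.mpr ⟨i, Set.mk_mem_prod
          (hi (Metric.mem_ball.mpr hlt)) (hi (Metric.mem_ball_self hδ))⟩)
      exact min_le_min hδle le_rfl
    have hBmeas : ∀ r : ℝ, MeasurableSet
        {t ∈ Set.Icc (-r) r | (f t, g t) ∉ ⋃ i, (U i) ×ˢ (U i)} := by
      intro r
      have hVopen : IsOpen (⋃ i, (U i) ×ˢ (U i)) := isOpen_iUnion fun i => (hU i).prod (hU i)
      have hclosed : IsClosed {t : ℝ | (f t, g t) ∈ (⋃ i, (U i) ×ˢ (U i))ᶜ} :=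
        IsClosed.preimage (hf.prodMk hg) hVopen.isClosed_compl
      exact measurableSet_Icc.inter hclosed.measurableSet
    have key : ∀ r : ℝ,
        c * (μ {t ∈ Set.Icc (-r) r | (f t, g t) ∉ ⋃ i, (U i) ×ˢ (U i)}).toReal ≤
          ∫ t in Set.Icc (-r) r, min (dist (f t) (g t)) 1 ∂μ := by
      intro r
      set B := {t ∈ Set.Icc (-r) r | (f t, g t) ∉ ⋃ i, (U i) ×ˢ (U i)} with hBdef
      have hBsub : B ⊆ Set.Icc (-r) r := fun t ht => ht.1
      have hBfin : μ B ≠ ⊤ := (lt_of_le_of_lt (measure_mono hBsub) (hμbd _ _)).ne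
      have h1 : c * (μ B).toReal ≤ ∫ t in B, min (dist (f t) (g t)) 1 ∂μ :=
        setIntegral_ge_of_const_le_real (hBmeas r) hBfin (fun t ht => hpt t ht.2)
          ((hint r).mono_set hBsub)
      refine h1.trans (setIntegral_mono_set (hint r) ?_ (HasSubset.Subset.eventuallyLE hBsub))
      filter_upwards with t
      exact le_min dist_nonneg zero_le_one
    apply squeeze_zero (g := fun r => c⁻¹ * ((μ (Set.Icc (-r) r)).toReal⁻¹ *
        ∫ t in Set.Icc (-r) r, min (dist (f t) (g t)) 1 ∂μ))
    · exact fun r => div_nonneg ENNReal.toReal_nonneg ENNReal.toReal_nonneg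
    · intro r
      set B := (μ {t ∈ Set.Icc (-r) r | (f t, g t) ∉ ⋃ i, (U i) ×ˢ (U i)}).toReal with hB
      set I := (μ (Set.Icc (-r) r)).toReal with hI
      set J := ∫ t in Set.Icc (-r) r, min (dist (f t) (g t)) 1 ∂μ with hJ
      have hBJ : B ≤ c⁻¹ * J := by
        have := key r
        rw [← hB, ← hJ] at this
        calc B = c⁻¹ * (c * B) := by field_simp
          _ ≤ c⁻¹ * J := by
              apply mul_le_mul_of_nonneg_left this (inv_nonneg.mpr hc0.le)
      calc B / I = B * I⁻¹ := div_eq_mul_inv _ _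
        _ ≤ (c⁻¹ * J) * I⁻¹ :=
            mul_le_mul_of_nonneg_right hBJ (inv_nonneg.mpr ENNReal.toReal_nonneg)
        _ = c⁻¹ * (I⁻¹ * J) := by ring
    · simpa using hmean.const_mul c⁻¹
  · -- cover ⟹ metric
    intro hcovs
    rw [Metric.tendsto_atTop]
    intro ε hε
    -- finite subcover of K by balls of radius ε/4
    obtain ⟨s, hs⟩ := hK.elim_finite_subcover (fun x : X => Metric.ball x (ε / 4))
      (fun x => Metric.isOpen_ball)
      (by intro x _
          exact Set.mem_iUnion_of_mem x (Metric.mem_ball_self (by positivity)))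
    set e : Fin s.card → X := fun i => (s.equivFin.symm i : X) with he
    set U : Fin s.card → Set X := fun i => Metric.ball (e i) (ε / 4) with hUdef
    have hUopen : ∀ i, IsOpen (U i) := fun i => Metric.isOpen_ball
    have hUcov : closure (Set.range g) ⊆ ⋃ i, U i := by
      intro x hx
      obtain ⟨y, hys, hxy⟩ := Set.mem_iUnion₂.mp (hs hx)
      refine Set.mem_iUnion.mpr ⟨s.equivFin ⟨y, hys⟩, ?_⟩
      simpa [hUdef, he] using hxy
    have hVd : ∀ t : ℝ, (f t, g t) ∈ (⋃ i, (U i) ×ˢ (U i)) → dist (f t) (g t) < ε / 2 := by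
      intro t htV
      obtain ⟨i, hfi, hgi⟩ := Set.mem_iUnion.mp htV
      have h1 : dist (f t) (e i) < ε / 4 := Metric.mem_ball.mp hfi
      have h2 : dist (g t) (e i) < ε / 4 := Metric.mem_ball.mp hgi
      calc dist (f t) (g t) ≤ dist (f t) (e i) + dist (g t) (e i) := dist_triangle_right _ _ _
        _ < ε / 2 := by linarith
    have hratio := hcovs s.card U hUopen hUcov
    rw [Metric.tendsto_atTop] at hratio
    obtain ⟨N₁, hN₁⟩ := hratio (ε / 4) (by positivity)
    obtain ⟨N₂, hN₂⟩ := eventually_atTop.mp hpos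
    refine ⟨max N₁ N₂, fun r hr => ?_⟩
    have hrN₁ : N₁ ≤ r := le_trans (le_max_left _ _) hr
    have hrN₂ : N₂ ≤ r := le_trans (le_max_right _ _) hr
    set B := {t ∈ Set.Icc (-r) r | (f t, g t) ∉ ⋃ i, (U i) ×ˢ (U i)} with hBdef
    have hBmeas : MeasurableSet B := by
      have hVopen : IsOpen (⋃ i, (U i) ×ˢ (U i)) := isOpen_iUnion fun i => (hUopen i).prod (hUopen i)
      have hclosed : IsClosed {t : ℝ | (f t, g t) ∈ (⋃ i, (U i) ×ˢ (U i))ᶜ} :=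
        IsClosed.preimage (hf.prodMk hg) hVopen.isClosed_compl
      exact measurableSet_Icc.inter hclosed.measurableSet
    have hBsub : B ⊆ Set.Icc (-r) r := fun t ht => ht.1
    set I := (μ (Set.Icc (-r) r)).toReal with hI
    have hI0 : 0 < I := hN₂ r hrN₂
    set J := ∫ t in Set.Icc (-r) r, min (dist (f t) (g t)) 1 ∂μ with hJ
    -- the integral bound
    have hkey : J ≤ (ε / 2) * I + (μ B).toReal := by
      haveI := hfin r
      have hptwise : ∀ t ∈ Set.Icc (-r) r,
          min (dist (f t) (g t)) 1 ≤ ε / 2 + B.indicator (fun _ => (1 : ℝ)) t := by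
        intro t htIcc
        by_cases htV : (f t, g t) ∈ ⋃ i, (U i) ×ˢ (U i)
        · have hB0 : B.indicator (fun _ => (1 : ℝ)) t = 0 :=
            Set.indicator_of_notMem (fun hmem => hmem.2 htV) _
          rw [hB0, add_zero]
          exact (min_le_left _ _).trans (hVd t htV).le
        · have hB1 : B.indicator (fun _ => (1 : ℝ)) t = 1 :=
            Set.indicator_of_mem (show t ∈ B from ⟨htIcc, htV⟩) _
          rw [hB1]
          have : min (dist (f t) (g t)) 1 ≤ 1 := min_le_right _ _
          linarith
      have hint2 : IntegrableOn (fun t => ε / 2 + B.indicator (fun _ => (1 : ℝ)) t)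
          (Set.Icc (-r) r) μ := by
        exact Integrable.add (integrable_const _)
          ((integrable_const (1 : ℝ) : Integrable _ (μ.restrict (Set.Icc (-r) r))).indicator
            hBmeas)
      have h1 : J ≤ ∫ t in Set.Icc (-r) r, (ε / 2 + B.indicator (fun _ => (1 : ℝ)) t) ∂μ := by
        apply setIntegral_mono_on (hint r) hint2 measurableSet_Icc hptwise
      have h2 : ∫ t in Set.Icc (-r) r, (ε / 2 + B.indicator (fun _ => (1 : ℝ)) t) ∂μ =
          (ε / 2) * I + (μ B).toReal := by
        rw [integral_add (integrable_const _)
          ((integrable_const (1 : ℝ) : Integrable _ (μ.restrict (Set.Icc (-r) r))).indicator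
            hBmeas)]
        congr 1
        · rw [setIntegral_const, smul_eq_mul, mul_comm]; rfl
        · rw [integral_indicator hBmeas, setIntegral_const, smul_eq_mul, mul_one,
            Measure.real, Measure.restrict_apply hBmeas, Set.inter_eq_self_of_subset_left hBsub]
      rw [h2] at h1; exact h1
    -- conclude
    have hmean_nn : 0 ≤ I⁻¹ * J := mul_nonneg (inv_nonneg.mpr hI0.le) (hintnn r)
    have hratio_lt : (μ B).toReal / I < ε / 4 := by
      have := hN₁ r hrN₁
      rw [Real.dist_eq, sub_zero] at this
      exact lt_of_abs_lt this
    have hmean_le : I⁻¹ * J ≤ ε / 2 + (μ B).toReal / I := by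
      have h3 : I⁻¹ * J ≤ I⁻¹ * ((ε / 2) * I + (μ B).toReal) :=
        mul_le_mul_of_nonneg_left hkey (inv_nonneg.mpr hI0.le)
      calc I⁻¹ * J ≤ I⁻¹ * ((ε / 2) * I + (μ B).toReal) := h3
        _ = ε / 2 + (μ B).toReal / I := by
            have hII : I⁻¹ * (ε / 2 * I) = ε / 2 := by field_simp
            rw [mul_add, hII, inv_mul_eq_div]
    rw [Real.dist_eq, sub_zero, abs_of_nonneg hmean_nn]
    calc I⁻¹ * J ≤ ε / 2 + (μ B).toReal / I := hmean_le
      _ < ε / 2 + ε / 4 := by linarith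
      _ < ε := by linarith
end

section
/- Let X be a metric space and μ a Borel measure on ℝ with μ(ℝ) = ∞, finite on bounded intervals, and satisfying condition (H): for every τ ∈ ℝ there exist β > 0 and a bounded interval I such that μ(A + τ) ≤ β μ(A) for every Borel set A with A ∩ I = ∅. If f : ℝ → X is continuous and g, g' are both almost automorphic functions such that t ↦ d(f(t), g(t)) ∧ 1 and t ↦ d(f(t), g'(t)) ∧ 1 are μ-ergodic (in E(ℝ, ℝ, μ)), then g = g'. Moreover the range of g is contained in the closure of the range of f. -/
open Filter Topology MeasureTheory Set
open scoped ENNReal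

noncomputable def mkSeq (F : ∀ n : ℕ, (∀ k, k < n → ℝ) → ℝ) : ℕ → ℝ
  | n => F n fun k _hk => mkSeq F k
termination_by n => n
decreasing_by exact _hk

lemma min_one_tendsto {d : ℕ → ℝ}
    (h : Tendsto (fun j => min (d j) 1) atTop (𝓝 0)) : Tendsto d atTop (𝓝 0) := by
  have hev : ∀ᶠ j in atTop, min (d j) 1 < 1/2 := h.eventually (gt_mem_nhds (by norm_num))
  refine h.congr' (hev.mono fun j hj => ?_)
  rcases le_total (d j) 1 with h1 | h1
  · exact min_eq_left h1
  · exfalso; rw [min_eq_right h1] at hj; norm_num at hj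

lemma L1 (μ : Measure ℝ) (hμinf : μ Set.univ = ⊤) (hμbd : ∀ a b : ℝ, μ (Set.Icc a b) < ⊤) :
    Tendsto (fun r : ℝ => (μ (Set.Icc (-r) r)).toReal) atTop atTop := by
  have hmono : Monotone (fun n : ℕ => Icc (-(n:ℝ)) n) := by
    intro i j hij
    have : (i:ℝ) ≤ j := by exact_mod_cast hij
    exact Icc_subset_Icc (by linarith) (by linarith)
  have hU : (⋃ n : ℕ, Icc (-(n:ℝ)) n) = univ := by
    ext x
    simp only [mem_iUnion, mem_Icc, mem_univ, iff_true]
    obtain ⟨n, hn⟩ := exists_nat_ge |x|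
    exact ⟨n, by cases abs_le.1 hn; constructor <;> linarith⟩
  have htop : Tendsto (fun n : ℕ => μ (Icc (-(n:ℝ)) n)) atTop (𝓝 ⊤) := by
    have := tendsto_measure_iUnion_atTop (μ := μ) hmono
    rwa [hU, hμinf] at this
  rw [tendsto_atTop]
  intro C
  obtain ⟨N, hN⟩ := (htop.eventually (eventually_gt_nhds
    (show ENNReal.ofReal C < ⊤ by simp))).exists
  filter_upwards [eventually_ge_atTop (N:ℝ)] with r hr
  have hsub : Icc (-(N:ℝ)) N ⊆ Icc (-r) r := Icc_subset_Icc (by linarith) hr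
  have hle : ENNReal.ofReal C ≤ μ (Icc (-r) r) := le_trans hN.le (measure_mono hsub)
  have hfin : μ (Icc (-r) r) ≠ ⊤ := (hμbd _ _).ne
  have h1 : C ≤ (ENNReal.ofReal C).toReal := by
    rcases le_total 0 C with h | h
    · rw [ENNReal.toReal_ofReal h]
    · simp [ENNReal.ofReal_eq_zero.2 h]; linarith
  exact h1.trans (ENNReal.toReal_mono hfin hle)

lemma L2 (μ : Measure ℝ) (hμbd : ∀ a b : ℝ, μ (Set.Icc a b) < ⊤)
    (hH : ∀ τ : ℝ, ∃ β : ℝ, 0 < β ∧ ∃ a b : ℝ, ∀ A : Set ℝ, MeasurableSet A →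
      A ∩ Set.Icc a b = ∅ → μ ((fun x => x + τ) '' A) ≤ ENNReal.ofReal β * μ A)
    (T : ℝ) (hT : 0 ≤ T) :
    ∃ K : ℝ, 0 < K ∧ ∀ᶠ r : ℝ in atTop,
      (μ (Icc (-(r+T)) (r+T))).toReal ≤ K * (μ (Icc (-r) r)).toReal := by
  obtain ⟨β₁, hβ₁, a₁, b₁, h1⟩ := hH T
  obtain ⟨β₂, hβ₂, a₂, b₂, h2⟩ := hH (-T)
  refine ⟨β₁ + β₂ + 1, by linarith, ?_⟩
  filter_upwards [eventually_ge_atTop (max (b₁ + T + 1) (max (T - a₂ + 1) T))] with r hr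
  have hr1 : b₁ + T + 1 ≤ r := le_trans (le_max_left _ _) hr
  have hr2 : T - a₂ + 1 ≤ r := le_trans ((le_max_left _ _).trans (le_max_right _ _)) hr
  have hrT : T ≤ r := le_trans ((le_max_right _ _).trans (le_max_right _ _)) hr
  -- right tail
  have him1 : (fun x => x + T) '' Icc (r - T) r = Icc r (r + T) := by
    rw [Set.image_add_right, Set.preimage_add_const_Icc]; ring_nf
  have hd1 : Icc (r - T) r ∩ Icc a₁ b₁ = ∅ := by
    rw [Set.eq_empty_iff_forall_notMem]
    rintro x ⟨⟨hx1, _⟩, ⟨_, hx4⟩⟩; linarith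
  have ht1 : μ (Icc r (r + T)) ≤ ENNReal.ofReal β₁ * μ (Icc (-r) r) := by
    rw [← him1]
    exact (h1 _ measurableSet_Icc hd1).trans
      (mul_le_mul_right (measure_mono (Icc_subset_Icc (by linarith) le_rfl)) _)
  -- left tail
  have him2 : (fun x => x + (-T)) '' Icc (-r) (-r + T) = Icc (-(r+T)) (-r) := by
    rw [Set.image_add_right, Set.preimage_add_const_Icc]; ring_nf
  have hd2 : Icc (-r) (-r + T) ∩ Icc a₂ b₂ = ∅ := by
    rw [Set.eq_empty_iff_forall_notMem]
    rintro x ⟨⟨_, hx2⟩, ⟨hx3, _⟩⟩; linarith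
  have ht2 : μ (Icc (-(r+T)) (-r)) ≤ ENNReal.ofReal β₂ * μ (Icc (-r) r) := by
    rw [← him2]
    exact (h2 _ measurableSet_Icc hd2).trans
      (mul_le_mul_right (measure_mono (Icc_subset_Icc le_rfl (by linarith))) _)
  have hcover : Icc (-(r+T)) (r+T) ⊆ Icc (-(r+T)) (-r) ∪ (Icc (-r) r ∪ Icc r (r + T)) := by
    rintro x ⟨hx1, hx2⟩
    rcases le_total x (-r) with h | h
    · exact Or.inl ⟨hx1, h⟩
    · rcases le_total x r with h' | h'
      · exact Or.inr (Or.inl ⟨h, h'⟩)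
      · exact Or.inr (Or.inr ⟨h', hx2⟩)
  have key : μ (Icc (-(r+T)) (r+T)) ≤ ENNReal.ofReal (β₁ + β₂ + 1) * μ (Icc (-r) r) := by
    calc μ (Icc (-(r+T)) (r+T)) ≤ μ (Icc (-(r+T)) (-r)) + (μ (Icc (-r) r) + μ (Icc r (r+T))) :=
          le_trans (measure_mono hcover) (le_trans (measure_union_le _ _)
            (add_le_add_right (measure_union_le _ _) _))
      _ ≤ ENNReal.ofReal β₂ * μ (Icc (-r) r) + (μ (Icc (-r) r) + ENNReal.ofReal β₁ * μ (Icc (-r) r)) :=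
          add_le_add ht2 (add_le_add_right ht1 _)
      _ = ENNReal.ofReal (β₁ + β₂ + 1) * μ (Icc (-r) r) := by
          rw [ENNReal.ofReal_add (by linarith) (by norm_num), ENNReal.ofReal_add hβ₁.le hβ₂.le]
          ring_nf
          rw [ENNReal.ofReal_one]
          ring
  have hfin : ENNReal.ofReal (β₁ + β₂ + 1) * μ (Icc (-r) r) ≠ ⊤ :=
    ENNReal.mul_ne_top ENNReal.ofReal_ne_top (hμbd _ _).ne
  have := ENNReal.toReal_mono hfin key
  rwa [ENNReal.toReal_mul, ENNReal.toReal_ofReal (by linarith)] at this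

lemma L4 (μ : Measure ℝ) (hμbd : ∀ a b : ℝ, μ (Set.Icc a b) < ⊤)
    (H : ℝ → ℝ) (hHc : Continuous H) (hH0 : ∀ t, 0 ≤ H t) (δ : ℝ) (hδ : 0 < δ) (R : ℝ) :
    μ ({u | δ < H u} ∩ Icc (-R) R) ≤
      ENNReal.ofReal (δ⁻¹ * ∫ t in Icc (-R) R, H t ∂μ) := by
  haveI : IsLocallyFiniteMeasure μ := ⟨fun x => ⟨Icc (x-1) (x+1),
    Icc_mem_nhds (by linarith) (by linarith), hμbd _ _⟩⟩
  have hint : IntegrableOn H (Icc (-R) R) μ := hHc.continuousOn.integrableOn_Icc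
  have hmark := mul_meas_ge_le_integral_of_nonneg
    (μ := μ.restrict (Icc (-R) R)) (f := H) (ae_of_all _ hH0) hint δ
  have hms : MeasurableSet {x : ℝ | δ ≤ H x} := (isClosed_le continuous_const hHc).measurableSet
  have happ : μ ({u | δ < H u} ∩ Icc (-R) R) ≤ μ.restrict (Icc (-R) R) {x | δ ≤ H x} := by
    rw [Measure.restrict_apply hms]
    exact measure_mono (inter_subset_inter_left _ (fun x (hx : δ < H x) => le_of_lt hx))
  have hfin : μ.restrict (Icc (-R) R) {x | δ ≤ H x} ≠ ⊤ := by
    rw [Measure.restrict_apply hms]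
    exact ((measure_mono (inter_subset_right)).trans_lt (hμbd _ _)).ne
  calc μ ({u | δ < H u} ∩ Icc (-R) R) ≤ μ.restrict (Icc (-R) R) {x | δ ≤ H x} := happ
    _ = ENNReal.ofReal ((μ.restrict (Icc (-R) R) {x | δ ≤ H x}).toReal) :=
        (ENNReal.ofReal_toReal hfin).symm
    _ ≤ ENNReal.ofReal (δ⁻¹ * ∫ t in Icc (-R) R, H t ∂μ) := by
        apply ENNReal.ofReal_le_ofReal
        rw [inv_mul_eq_div, le_div_iff₀ hδ, mul_comm]
        exact hmark



lemma claimA (μ : Measure ℝ) (hμinf : μ Set.univ = ⊤) (hμbd : ∀ a b : ℝ, μ (Set.Icc a b) < ⊤)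
    (hH : ∀ τ : ℝ, ∃ β : ℝ, 0 < β ∧ ∃ a b : ℝ, ∀ A : Set ℝ, MeasurableSet A →
      A ∩ Set.Icc a b = ∅ → μ ((fun x => x + τ) '' A) ≤ ENNReal.ofReal β * μ A)
    (H : ℝ → ℝ) (hHc : Continuous H) (hH0 : ∀ t, 0 ≤ H t)
    (he : Tendsto (fun r : ℝ => (μ (Set.Icc (-r) r)).toReal⁻¹ *
        ∫ t in Set.Icc (-r) r, H t ∂μ) atTop (𝓝 0))
    (δ : ℝ) (hδ : 0 < δ) (v : ℕ → ℝ) (n : ℕ) :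
    ∃ x : ℝ, ∀ k < n, H (x + v k) ≤ δ := by
  classical
  set B : Set ℝ := {u | δ < H u} with hBdef
  set T : ℝ := ∑ k ∈ Finset.range n, |v k| with hTdef
  have hT : 0 ≤ T := Finset.sum_nonneg fun i _ => abs_nonneg _
  have hvT : ∀ k, k < n → |v k| ≤ T := fun k hk =>
    Finset.single_le_sum (fun i _ => abs_nonneg (v i)) (Finset.mem_range.2 hk)
  choose β hβ a b hab using fun k : ℕ => hH (-(v k))
  set Bs : ℝ := ∑ k ∈ Finset.range n, β k with hBsdef
  have hBs : 0 ≤ Bs := Finset.sum_nonneg fun i _ => (hβ i).le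
  have hβBs : ∀ k, k < n → β k ≤ Bs := fun k hk =>
    Finset.single_le_sum (fun i _ => (hβ i).le) (Finset.mem_range.2 hk)
  set C : ℝ≥0∞ := ∑ k ∈ Finset.range n, μ (Icc (a k - v k) (b k - v k)) with hCdef
  have hCfin : C ≠ ⊤ := by
    refine (ENNReal.sum_lt_top.2 fun i _ => hμbd _ _).ne
  obtain ⟨K, hK, hKev⟩ := L2 μ hμbd hH T hT
  set β' : ℝ := n * Bs + 1 with hβ'def
  have hβ' : 0 < β' := by positivity
  set ε₀ : ℝ := δ * (2 * β' * K)⁻¹ with hε₀def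
  have hε₀ : 0 < ε₀ := by positivity
  set m : ℝ → ℝ := fun r => (μ (Icc (-r) r)).toReal with hmdef
  set J : ℝ → ℝ := fun r => ∫ t in Icc (-r) r, H t ∂μ with hJdef
  have hJ0 : ∀ r, 0 ≤ J r := fun r => integral_nonneg hH0
  have hm0 : ∀ r, 0 ≤ m r := fun r => ENNReal.toReal_nonneg
  have hmT : Tendsto (fun r => m (r + T)) atTop atTop :=
    (L1 μ hμinf hμbd).comp (tendsto_atTop_add_const_right atTop T tendsto_id)
  have heT : Tendsto (fun r => (m (r+T))⁻¹ * J (r+T)) atTop (𝓝 0) :=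
    he.comp (tendsto_atTop_add_const_right atTop T tendsto_id)
  -- choose a suitable radius r
  obtain ⟨r, hr1, hr2, hr3, hr4⟩ :
      ∃ r : ℝ, m (r+T) ≤ K * m r ∧ (m (r+T))⁻¹ * J (r+T) < ε₀ ∧
        1 ≤ m (r+T) ∧ 2 * C.toReal + 1 ≤ m r := by
    have e1 := hKev
    have e2 := heT.eventually (gt_mem_nhds hε₀)
    have e3 := hmT.eventually_ge_atTop 1
    have e4 := (L1 μ hμinf hμbd).eventually_ge_atTop (2 * C.toReal + 1)
    obtain ⟨r, h1, h2, h3, h4⟩ := (e1.and (e2.and (e3.and e4))).exists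
    exact ⟨r, h1, h2, h3, h4⟩
  have hmr : 0 < m r := by nlinarith [ENNReal.toReal_nonneg (a := C)]
  -- per-shift bound
  set R : ℝ := r + T with hRdef
  set X : ℝ≥0∞ := μ (B ∩ Icc (-R) R) with hXdef
  set S : ℕ → Set ℝ := fun k => Icc (-r) r ∩ (fun t => t + v k) ⁻¹' B with hSdef
  have hBopen : IsOpen B := isOpen_lt continuous_const hHc
  have hkey : ∀ k, k < n → μ (S k) ≤ ENNReal.ofReal Bs * X + μ (Icc (a k - v k) (b k - v k)) := by
    intro k hk
    have hSmeas : MeasurableSet (S k) :=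
      measurableSet_Icc.inter (hBopen.measurableSet.preimage (measurable_add_const _))
    set E : Set ℝ := ((fun x => x + v k) '' S k) \ Icc (a k) (b k) with hEdef
    have hEmeas : MeasurableSet E := by
      rw [hEdef, Set.image_add_right]
      exact (hSmeas.preimage (measurable_add_const _)).diff measurableSet_Icc
    have hEdisj : E ∩ Icc (a k) (b k) = ∅ := by
      rw [hEdef]; ext x; simp only [mem_inter_iff, mem_diff, mem_empty_iff_false, iff_false]
      rintro ⟨⟨-, hni⟩, hi⟩; exact hni hi
    have happly := hab k E hEmeas hEdisj
    have hsub1 : S k \ Icc (a k - v k) (b k - v k) ⊆ (fun x => x + -(v k)) '' E := by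
      rintro x ⟨hxS, hxI⟩
      refine ⟨x + v k, ⟨⟨x, hxS, rfl⟩, fun hmem => hxI ⟨by linarith [hmem.1], by linarith [hmem.2]⟩⟩, by ring⟩
    have hsub2 : E ⊆ B ∩ Icc (-R) R := by
      rintro x ⟨⟨y, hyS, rfl⟩, -⟩
      have h1 := hyS.1.1
      have h2 := hyS.1.2
      have h3 := abs_le.1 (hvT k hk)
      exact ⟨hyS.2, by constructor <;> [skip; skip] <;> simp only [hRdef] <;> linarith [h3.1, h3.2]⟩
    calc μ (S k) ≤ μ ((S k \ Icc (a k - v k) (b k - v k)) ∪ Icc (a k - v k) (b k - v k)) :=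
          measure_mono fun x hx => by
            by_cases h : x ∈ Icc (a k - v k) (b k - v k)
            · exact Or.inr h
            · exact Or.inl ⟨hx, h⟩
      _ ≤ μ (S k \ Icc (a k - v k) (b k - v k)) + μ (Icc (a k - v k) (b k - v k)) :=
          measure_union_le _ _
      _ ≤ μ ((fun x => x + -(v k)) '' E) + μ (Icc (a k - v k) (b k - v k)) :=
          add_le_add_left (measure_mono hsub1) _
      _ ≤ ENNReal.ofReal (β k) * μ E + μ (Icc (a k - v k) (b k - v k)) :=
          add_le_add_left happly _
      _ ≤ ENNReal.ofReal Bs * X + μ (Icc (a k - v k) (b k - v k)) :=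
          add_le_add_left (mul_le_mul' (ENNReal.ofReal_le_ofReal (hβBs k hk))
            (measure_mono hsub2)) _
  -- union bound
  have hunion : μ (⋃ k ∈ Finset.range n, S k) ≤
      (n : ℝ≥0∞) * (ENNReal.ofReal Bs * X) + C := by
    calc μ (⋃ k ∈ Finset.range n, S k) ≤ ∑ k ∈ Finset.range n, μ (S k) :=
          measure_biUnion_finset_le _ _
      _ ≤ ∑ k ∈ Finset.range n, (ENNReal.ofReal Bs * X + μ (Icc (a k - v k) (b k - v k))) :=
          Finset.sum_le_sum fun k hk => hkey k (Finset.mem_range.1 hk)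
      _ = (n : ℝ≥0∞) * (ENNReal.ofReal Bs * X) + C := by
          rw [Finset.sum_add_distrib, Finset.sum_const, Finset.card_range, nsmul_eq_mul, hCdef]
  -- Markov + ergodic bound
  have hmark : X ≤ ENNReal.ofReal (δ⁻¹ * J R) := L4 μ hμbd H hHc hH0 δ hδ R
  have hJR : J R ≤ ε₀ * (K * m r) := by
    have hmR : m R ≠ 0 := by simp only [hRdef]; nlinarith
    have : J R = m R * ((m R)⁻¹ * J R) := by field_simp
    rw [this]
    have h1 : (m R)⁻¹ * J R ≤ ε₀ := hr2.le
    have h2 : 0 ≤ (m R)⁻¹ * J R := mul_nonneg (inv_nonneg.2 (hm0 _)) (hJ0 _)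
    calc m R * ((m R)⁻¹ * J R) ≤ (K * m r) * ε₀ :=
          mul_le_mul hr1 h1 h2 (by positivity)
      _ = ε₀ * (K * m r) := by ring
  have hmain : (n : ℝ≥0∞) * (ENNReal.ofReal Bs * X) + C < μ (Icc (-r) r) := by
    have h1 : (n : ℝ≥0∞) * (ENNReal.ofReal Bs * X) ≤ ENNReal.ofReal (m r / 2) := by
      calc (n : ℝ≥0∞) * (ENNReal.ofReal Bs * X)
          ≤ (n : ℝ≥0∞) * (ENNReal.ofReal Bs * ENNReal.ofReal (δ⁻¹ * J R)) := by gcongr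
        _ = ENNReal.ofReal (((n:ℝ) * Bs) * (δ⁻¹ * J R)) := by
            rw [← ENNReal.ofReal_mul hBs, ← ENNReal.ofReal_natCast n,
              ← ENNReal.ofReal_mul (Nat.cast_nonneg n)]
            congr 1
            ring
        _ ≤ ENNReal.ofReal (m r / 2) := by
            apply ENNReal.ofReal_le_ofReal
            have hnBs : (n:ℝ) * Bs ≤ β' := by simp only [hβ'def]; linarith
            have hJR' : δ⁻¹ * J R ≤ δ⁻¹ * (ε₀ * (K * m r)) :=
              mul_le_mul_of_nonneg_left hJR (inv_nonneg.2 hδ.le)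
            have hstep : δ⁻¹ * (ε₀ * (K * m r)) = (2*β')⁻¹ * m r := by
              simp only [hε₀def]
              field_simp
            have h4 : ((n:ℝ)*Bs) * (δ⁻¹ * J R) ≤ β' * (δ⁻¹ * (ε₀ * (K * m r))) :=
              mul_le_mul hnBs hJR' (mul_nonneg (inv_nonneg.2 hδ.le) (hJ0 R)) hβ'.le
            rw [hstep] at h4
            calc ((n:ℝ) * Bs) * (δ⁻¹ * J R) ≤ β' * ((2*β')⁻¹ * m r) := h4
              _ = m r / 2 := by field_simp
    have h2 : C = ENNReal.ofReal C.toReal := (ENNReal.ofReal_toReal hCfin).symm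
    calc (n : ℝ≥0∞) * (ENNReal.ofReal Bs * X) + C ≤
          ENNReal.ofReal (m r / 2) + ENNReal.ofReal C.toReal := by rw [← h2]; exact add_le_add_left h1 _
      _ = ENNReal.ofReal (m r / 2 + C.toReal) :=
          (ENNReal.ofReal_add (by positivity) ENNReal.toReal_nonneg).symm
      _ < ENNReal.ofReal (m r) := by
          apply (ENNReal.ofReal_lt_ofReal_iff hmr).2
          nlinarith
      _ = μ (Icc (-r) r) := ENNReal.ofReal_toReal (hμbd _ _).ne
  -- extract a point
  have hnsub : ¬ (Icc (-r) r ⊆ ⋃ k ∈ Finset.range n, S k) := by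
    intro hsub
    exact absurd (le_trans (measure_mono hsub) hunion) (not_le.2 hmain)
  obtain ⟨x, hxI, hxU⟩ := not_subset.1 hnsub
  refine ⟨x, fun k hk => ?_⟩
  by_contra hgt
  push_neg at hgt
  exact hxU (mem_biUnion (Finset.mem_range.2 hk) ⟨hxI, hgt⟩)

/-- Uniqueness of the almost automorphic part in the decomposition of a
`μ`-pseudo almost automorphic function in the wide sense, under condition (H);
moreover the range of the almost automorphic part is contained in the closure
of the range of `f`. -/
theorem stmt_10 {X : Type*} [MetricSpace X]
    (μ : Measure ℝ) (hμinf : μ Set.univ = ⊤)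
    (hμbd : ∀ a b : ℝ, μ (Set.Icc a b) < ⊤)
    (hH : ∀ τ : ℝ, ∃ β : ℝ, 0 < β ∧ ∃ a b : ℝ, ∀ A : Set ℝ, MeasurableSet A →
      A ∩ Set.Icc a b = ∅ → μ ((fun x => x + τ) '' A) ≤ ENNReal.ofReal β * μ A)
    (f : ℝ → X) (hf : Continuous f)
    (g g' : ℝ → X) (hgaa : IsAlmostAutomorphic g) (hg'aa : IsAlmostAutomorphic g')
    (hcg : Continuous g) (hcg' : Continuous g')
    (herg : Tendsto (fun r : ℝ => (μ (Set.Icc (-r) r)).toReal⁻¹ *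
        ∫ t in Set.Icc (-r) r, min (dist (f t) (g t)) 1 ∂μ) atTop (𝓝 0))
    (herg' : Tendsto (fun r : ℝ => (μ (Set.Icc (-r) r)).toReal⁻¹ *
        ∫ t in Set.Icc (-r) r, min (dist (f t) (g' t)) 1 ∂μ) atTop (𝓝 0)) :
    g = g' ∧ Set.range g ⊆ closure (Set.range f) := by
  classical
  haveI : IsLocallyFiniteMeasure μ := ⟨fun x => ⟨Icc (x-1) (x+1),
    Icc_mem_nhds (by linarith) (by linarith), hμbd _ _⟩⟩
  set H : ℝ → ℝ := fun t => min (dist (f t) (g t)) 1 + min (dist (f t) (g' t)) 1 with hHdef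
  have hHc : Continuous H := ((hf.dist hcg).min continuous_const).add
    ((hf.dist hcg').min continuous_const)
  have hH0 : ∀ t, 0 ≤ H t := fun t =>
    add_nonneg (le_min dist_nonneg zero_le_one) (le_min dist_nonneg zero_le_one)
  have hint1 : ∀ r : ℝ, IntegrableOn (fun t => min (dist (f t) (g t)) 1) (Icc (-r) r) μ :=
    fun r => ((hf.dist hcg).min continuous_const).continuousOn.integrableOn_Icc
  have hint2 : ∀ r : ℝ, IntegrableOn (fun t => min (dist (f t) (g' t)) 1) (Icc (-r) r) μ :=
    fun r => ((hf.dist hcg').min continuous_const).continuousOn.integrableOn_Icc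
  have hsplit : ∀ r : ℝ, (∫ t in Icc (-r) r, H t ∂μ) =
      (∫ t in Icc (-r) r, min (dist (f t) (g t)) 1 ∂μ) +
      ∫ t in Icc (-r) r, min (dist (f t) (g' t)) 1 ∂μ :=
    fun r => integral_add (hint1 r) (hint2 r)
  have he : Tendsto (fun r : ℝ => (μ (Set.Icc (-r) r)).toReal⁻¹ *
      ∫ t in Set.Icc (-r) r, H t ∂μ) atTop (𝓝 0) := by
    have h := herg.add herg'
    rw [add_zero] at h
    exact h.congr fun r => by rw [hsplit r, mul_add]
  have hA : ∀ δ : ℝ, 0 < δ → ∀ (v : ℕ → ℝ) (n : ℕ), ∃ x : ℝ, ∀ k < n, H (x + v k) ≤ δ := by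
    intro δ hδ v n
    exact claimA μ hμinf hμbd hH H hHc hH0 he δ hδ v n
  have hpos : ∀ n : ℕ, (0:ℝ) < 1/((n:ℝ)+1) := fun n => by positivity
  have main : ∀ t₀ : ℝ, g t₀ = g' t₀ ∧ g t₀ ∈ closure (Set.range f) := by
    intro t₀
    set F : ∀ n : ℕ, (∀ k, k < n → ℝ) → ℝ := fun n prev =>
      Classical.choose (hA (1/((n:ℝ)+1)) (hpos n)
        (fun k => if h : k < n then t₀ - prev k h else 0) n) with hFdef
    set t : ℕ → ℝ := mkSeq F with htdef
    have hspec : ∀ n k, k < n → H (t n + (t₀ - t k)) ≤ 1/((n:ℝ)+1) := by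
      intro n k hk
      have hspec' := Classical.choose_spec (hA (1/((n:ℝ)+1)) (hpos n)
        (fun k => if h : k < n then t₀ - t k else 0) n) k hk
      rw [dif_pos hk] at hspec'
      have heq : t n = Classical.choose (hA (1/((n:ℝ)+1)) (hpos n)
          (fun k => if h : k < n then t₀ - t k else 0) n) := by
        rw [htdef, mkSeq]
      rw [heq]
      exact hspec'
    obtain ⟨φ₁, hφ₁, G, hG1, hG2⟩ := hgaa t
    obtain ⟨φ₂, hφ₂, G', hG'1, hG'2⟩ := hg'aa (t ∘ φ₁)
    set φ : ℕ → ℕ := φ₁ ∘ φ₂ with hφdef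
    have hφ : StrictMono φ := hφ₁.comp hφ₂
    have LG1 : ∀ s : ℝ, Tendsto (fun j => g (s + t (φ j))) atTop (𝓝 (G s)) :=
      fun s => (hG1 s).comp hφ₂.tendsto_atTop
    have LG2 : Tendsto (fun j => G (t₀ - t (φ j))) atTop (𝓝 (g t₀)) :=
      (hG2 t₀).comp hφ₂.tendsto_atTop
    have LG'1 : ∀ s : ℝ, Tendsto (fun j => g' (s + t (φ j))) atTop (𝓝 (G' s)) :=
      fun s => hG'1 s
    have LG'2 : Tendsto (fun j => G' (t₀ - t (φ j))) atTop (𝓝 (g' t₀)) := hG'2 t₀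
    -- for each k, the value G (t₀ - t (φ k)) is a limit of values of f,
    -- and agrees with G' (t₀ - t (φ k))
    have key : ∀ k : ℕ, G (t₀ - t (φ k)) = G' (t₀ - t (φ k)) ∧
        G (t₀ - t (φ k)) ∈ closure (Set.range f) := by
      intro k
      set s : ℝ := t₀ - t (φ k) with hsdef
      set u : ℕ → ℝ := fun j => s + t (φ j) with hudef
      have hu : ∀ j, k < j → H (u j) ≤ 1/((j:ℝ)+1) := by
        intro j hkj
        have h1 := hspec (φ j) (φ k) (hφ hkj)
        have h2 : u j = t (φ j) + (t₀ - t (φ k)) := by rw [hudef]; ring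
        rw [h2]
        refine h1.trans ?_
        have h3 : (j:ℝ) + 1 ≤ (φ j : ℝ) + 1 := by
          have := hφ.le_apply (x := j)
          exact_mod_cast Nat.succ_le_succ this
        exact one_div_le_one_div_of_le (by positivity) h3
      have hHu : Tendsto (fun j => H (u j)) atTop (𝓝 0) := by
        apply squeeze_zero' (Eventually.of_forall fun j => hH0 _)
          (eventually_atTop.2 ⟨k+1, fun j hj => hu j (Nat.lt_of_succ_le hj)⟩)
        exact tendsto_one_div_add_atTop_nhds_zero_nat
      have hd1 : Tendsto (fun j => dist (f (u j)) (g (u j))) atTop (𝓝 0) := by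
        apply min_one_tendsto
        apply squeeze_zero (fun j => le_min dist_nonneg zero_le_one)
          (fun j => (le_add_of_nonneg_right (le_min dist_nonneg zero_le_one)).trans le_rfl) hHu
      have hd2 : Tendsto (fun j => dist (f (u j)) (g' (u j))) atTop (𝓝 0) := by
        apply min_one_tendsto
        apply squeeze_zero (fun j => le_min dist_nonneg zero_le_one)
          (fun j => (le_add_of_nonneg_left (le_min dist_nonneg zero_le_one)).trans le_rfl) hHu
      have hgp : Tendsto (fun j => dist (g (u j)) (G s)) atTop (𝓝 0) :=
        tendsto_iff_dist_tendsto_zero.1 (LG1 s)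
      have hg'q : Tendsto (fun j => dist (g' (u j)) (G' s)) atTop (𝓝 0) :=
        tendsto_iff_dist_tendsto_zero.1 (LG'1 s)
      have hfp : Tendsto (fun j => f (u j)) atTop (𝓝 (G s)) := by
        rw [tendsto_iff_dist_tendsto_zero]
        have := hd1.add hgp
        rw [add_zero] at this
        exact squeeze_zero (fun j => dist_nonneg) (fun j => dist_triangle _ _ _) this
      have hfq : Tendsto (fun j => f (u j)) atTop (𝓝 (G' s)) := by
        rw [tendsto_iff_dist_tendsto_zero]
        have := hd2.add hg'q
        rw [add_zero] at this
        exact squeeze_zero (fun j => dist_nonneg) (fun j => dist_triangle _ _ _) this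
      exact ⟨tendsto_nhds_unique hfp hfq,
        mem_closure_of_tendsto hfp (Eventually.of_forall fun j => mem_range_self _)⟩
    constructor
    · refine tendsto_nhds_unique LG2 ?_
      exact LG'2.congr fun k => ((key k).1).symm
    · exact isClosed_closure.mem_of_tendsto LG2
        (Eventually.of_forall fun k => (key k).2)
  exact ⟨funext fun t₀ => (main t₀).1, by rintro x ⟨t₀, rfl⟩; exact (main t₀).2⟩
end

section
/- The stationary Ornstein–Uhlenbeck process X is not square-mean almost automorphic in the Besicovitch sense: there is no sequence analysis making translates of X Cauchy for the seminorm ‖h‖_{B²} = limsup_{r→∞} ((1/2r) ∫_{−r}^r E|h(t)|² dt)^{1/2}. Specifically, for any increasing sequence (t_n) → +∞, ‖X(t_n) − X(t_{n+m})‖²_{B²} = 2σ²(1 − e^{−α(t_{n+m} − t_n)}), which prevents the Cauchy property for ε < 2σ² whenever t_{n+m} − t_n → ∞. -/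
open Filter Topology MeasureTheory Set

lemma limsup_avg_const (c : ℝ) :
    Filter.limsup (fun r : ℝ => (1 / (2 * r)) * ∫ _s in Set.Icc (-r) r, c) atTop = c := by
  have h : ∀ᶠ r : ℝ in atTop,
      (1 / (2 * r)) * ∫ _s in Set.Icc (-r) r, c = c := by
    filter_upwards [eventually_gt_atTop (0 : ℝ)] with r hr
    rw [setIntegral_const, measureReal_def, Real.volume_Icc, smul_eq_mul]
    have h2 : r - (-r) = 2 * r := by ring
    rw [h2, ENNReal.toReal_ofReal (by linarith)]
    field_simp
  rw [limsup_congr h, limsup_const]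

/-- For the stationary Ornstein–Uhlenbeck process, the squared Besicovitch
seminorm of `X(tₙ + ·) − X(tₙ₊ₘ + ·)` equals `2σ²(1 − e^{−α(tₙ₊ₘ − tₙ)})`, which
prevents the Cauchy property (for the Besicovitch seminorm) for `ε < 2σ²`. -/
theorem stmt_12 {Ω : Type*} [MeasurableSpace Ω] (P : Measure Ω) [IsProbabilityMeasure P]
    (α σ : ℝ) (hα : 0 < α) (hσ : 0 < σ)
    (X : ℝ → Ω → ℝ)
    (hmeas : ∀ t, Measurable (X t))
    (hL2 : ∀ t, MemLp (X t) 2 P)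
    (hcov : ∀ t s : ℝ, ∫ ω, X t ω * X s ω ∂P = σ ^ 2 * Real.exp (-α * |t - s|)) :
    ∀ t : ℕ → ℝ, StrictMono t → Tendsto t atTop atTop →
      (∀ n m : ℕ,
        Filter.limsup (fun r : ℝ => (1 / (2 * r)) *
            ∫ s in Set.Icc (-r) r, (∫ ω, (X (t n + s) ω - X (t (n + m) + s) ω) ^ 2 ∂P))
          atTop
        = 2 * σ ^ 2 * (1 - Real.exp (-α * (t (n + m) - t n)))) ∧
      (∀ ε : ℝ, 0 < ε → ε < 2 * σ ^ 2 →
        ¬ ∃ N : ℕ, ∀ n ≥ N, ∀ m : ℕ,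
          Filter.limsup (fun r : ℝ => (1 / (2 * r)) *
              ∫ s in Set.Icc (-r) r, (∫ ω, (X (t n + s) ω - X (t (n + m) + s) ω) ^ 2 ∂P))
            atTop ≤ ε) := by
  -- integrability of products
  have hmul : ∀ a b : ℝ, Integrable (fun ω => X a ω * X b ω) P := by
    intro a b
    have h1 := ((hL2 a).add (hL2 b)).integrable_sq
    have h2 := (hL2 a).integrable_sq
    have h3 := (hL2 b).integrable_sq
    have h4 := (((h1.sub h2).sub h3).div_const 2)
    refine h4.congr (Filter.Eventually.of_forall fun ω => ?_)
    simp only [Pi.add_apply, Pi.sub_apply]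
    ring
  -- the key computation of the second moment
  have sq_int : ∀ a b : ℝ, ∫ ω, (X a ω - X b ω) ^ 2 ∂P
      = 2 * σ ^ 2 * (1 - Real.exp (-α * |a - b|)) := by
    intro a b
    have hiaa := hmul a a
    have hiab := hmul a b
    have hibb := hmul b b
    have hs2 : Integrable (fun ω => 2 * (X a ω * X b ω)) P := hiab.const_mul 2
    have hs1 : Integrable (fun ω => X a ω * X a ω - 2 * (X a ω * X b ω)) P := hiaa.sub hs2
    have hpt : ∀ ω, (X a ω - X b ω) ^ 2
        = X a ω * X a ω - 2 * (X a ω * X b ω) + X b ω * X b ω := fun ω => by ring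
    calc ∫ ω, (X a ω - X b ω) ^ 2 ∂P
        = ∫ ω, (X a ω * X a ω - 2 * (X a ω * X b ω) + X b ω * X b ω) ∂P := by
          simp_rw [hpt]
      _ = 2 * σ ^ 2 * (1 - Real.exp (-α * |a - b|)) := by
          rw [integral_add hs1 hibb, integral_sub hiaa hs2, integral_const_mul,
            hcov, hcov, hcov]
          simp [sub_self, abs_zero]
          ring
  intro t hmono htop
  have key : ∀ n m : ℕ,
      Filter.limsup (fun r : ℝ => (1 / (2 * r)) *
          ∫ s in Set.Icc (-r) r, (∫ ω, (X (t n + s) ω - X (t (n + m) + s) ω) ^ 2 ∂P))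
        atTop
      = 2 * σ ^ 2 * (1 - Real.exp (-α * (t (n + m) - t n))) := by
    intro n m
    have hle : t n ≤ t (n + m) := hmono.monotone (Nat.le_add_right n m)
    have hconst : ∀ s : ℝ, ∫ ω, (X (t n + s) ω - X (t (n + m) + s) ω) ^ 2 ∂P
        = 2 * σ ^ 2 * (1 - Real.exp (-α * (t (n + m) - t n))) := by
      intro s
      rw [sq_int]
      have h5 : t n + s - (t (n + m) + s) = -(t (n + m) - t n) := by ring
      rw [h5, abs_neg, abs_of_nonneg (by linarith)]
    simp_rw [hconst]
    exact limsup_avg_const _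
  refine ⟨key, ?_⟩
  rintro ε hε hε2 ⟨N, hN⟩
  -- t (N + m) - t N → ∞, so exp (-α * (t (N+m) - t N)) → 0
  have hNm : Tendsto (fun m : ℕ => N + m) atTop atTop := by
    apply tendsto_atTop_atTop.mpr
    intro b
    exact ⟨b, fun a ha => le_trans ha (Nat.le_add_left a N)⟩
  have h1 : Tendsto (fun m : ℕ => t (N + m)) atTop atTop := htop.comp hNm
  have h2 : Tendsto (fun m : ℕ => t (N + m) - t N) atTop atTop :=
    tendsto_atTop_add_const_right _ (-(t N)) h1
  have h3 : Tendsto (fun m : ℕ => -α * (t (N + m) - t N)) atTop atBot := by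
    have h4 : Tendsto (fun m : ℕ => α * (t (N + m) - t N)) atTop atTop :=
      h2.const_mul_atTop hα
    exact (tendsto_neg_atTop_atBot.comp h4).congr fun m => (neg_mul α _).symm
  have htend : Tendsto (fun m : ℕ => Real.exp (-α * (t (N + m) - t N))) atTop (nhds 0) :=
    Real.tendsto_exp_atBot.comp h3
  have hpos : (0 : ℝ) < (2 * σ ^ 2 - ε) / (2 * σ ^ 2) :=
    div_pos (by linarith) (by positivity)
  obtain ⟨m, hm⟩ := (htend.eventually_lt_const hpos).exists
  have hle := hN N le_rfl m
  rw [key N m] at hle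
  have hσ2 : (0 : ℝ) < 2 * σ ^ 2 := by positivity
  rw [lt_div_iff₀ hσ2] at hm
  nlinarith [hm, hle]
end

section
/- If X and Y are two centered Gaussian processes on ℝ (on the same probability space) with Y(t) = X(0) for all t, where X is the stationary Ornstein–Uhlenbeck process with covariance σ² e^{−α|t−s|}, then the process Z = X + Y is not almost automorphic in one-dimensional distributions: the laws N(0, 2σ²(1 + e^{−α|t|})) converge along t + n → ∞ to N(0, 2σ²) =: Ŷ(t), but Ŷ(t − n) converges to N(0, 2σ²) ≠ Law(Z(t)). -/
open Filter Topology MeasureTheory Set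

open ProbabilityTheory
open scoped NNReal ENNReal

lemma gauss_int (v : ℝ≥0) (hv : v ≠ 0) :
    ∫ x, Real.exp (-x^2/2) ∂(gaussianReal 0 v) = (Real.sqrt (1 + v))⁻¹ := by
  have hvp : 0 < v := pos_iff_ne_zero.mpr hv
  have hv' : (0:ℝ) < (v:ℝ) := by exact_mod_cast hvp
  rw [gaussianReal_of_var_ne_zero 0 hv]
  have hd : gaussianPDF 0 v = fun x => ((fun y => (gaussianPDFReal 0 v y).toNNReal) x : ℝ≥0∞) := rfl
  rw [hd, integral_withDensity_eq_integral_smul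
    ((measurable_gaussianPDFReal 0 v).real_toNNReal)]
  have key : ∀ x : ℝ, (gaussianPDFReal 0 v x).toNNReal • Real.exp (-x^2/2)
      = (Real.sqrt (2 * Real.pi * v))⁻¹ * Real.exp (-((1+v)/(2*v)) * x^2) := by
    intro x
    rw [NNReal.smul_def, Real.coe_toNNReal _ (gaussianPDFReal_nonneg 0 v x),
      gaussianPDFReal]
    rw [smul_eq_mul, mul_assoc, ← Real.exp_add]
    congr 1
    field_simp
    ring
  simp_rw [key]
  rw [MeasureTheory.integral_const_mul, integral_gaussian]
  have h1v : (0:ℝ) < 1 + (v:ℝ) := by positivity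
  have heq : Real.pi / ((1+(v:ℝ))/(2*v)) = (2 * Real.pi * v) / (1+(v:ℝ)) := by
    field_simp
  rw [heq, Real.sqrt_div (by positivity) (1+(v:ℝ))]
  have hne : Real.sqrt (2 * Real.pi * v) ≠ 0 := by
    positivity
  field_simp

noncomputable def testf : BoundedContinuousFunction ℝ ℝ :=
  BoundedContinuousFunction.ofNormedAddCommGroup (fun x => Real.exp (-x^2/2))
    (by continuity) 1 (fun x => by
      rw [Real.norm_eq_abs, abs_of_pos (Real.exp_pos _)]
      exact Real.exp_le_one_iff.mpr (by nlinarith [sq_nonneg x]))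

lemma testf_apply (x : ℝ) : testf x = Real.exp (-x^2/2) := rfl

/-- If `X` is the stationary Ornstein–Uhlenbeck process and `Y(t) = X(0)`, then
`Z = X + Y`, whose one-dimensional law at time `t` is `N(0, 2σ²(1+e^{−α|t|}))`,
is not almost automorphic in one-dimensional distributions. -/
theorem stmt_13 {Ω : Type*} [MeasurableSpace Ω] (P : Measure Ω) [IsProbabilityMeasure P]
    (α σ : ℝ) (hα : 0 < α) (hσ : 0 < σ)
    (X : ℝ → Ω → ℝ) (hmeas : ∀ t, Measurable (X t))
    (L : ℝ → ProbabilityMeasure ℝ)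
    (hL : ∀ t : ℝ, (L t : Measure ℝ) = Measure.map (fun ω => X t ω + X 0 ω) P)
    (hlaw : ∀ t : ℝ, Measure.map (fun ω => X t ω + X 0 ω) P =
      ProbabilityTheory.gaussianReal 0
        (Real.toNNReal (2 * σ ^ 2 * (1 + Real.exp (-α * |t|))))) :
    ¬ IsAlmostAutomorphic L := by
  intro h
  obtain ⟨φ, hφ, g, h1, h2⟩ := h (fun n => (n : ℝ))
  set F : ℝ → ℝ := fun t => ∫ x, testf x ∂(L t : Measure ℝ) with hF
  have hσ2 : (0:ℝ) < σ ^ 2 := pow_pos hσ 2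
  have hvpos : ∀ t : ℝ, (0:ℝ) < 2 * σ ^ 2 * (1 + Real.exp (-α * |t|)) := fun t =>
    mul_pos (by linarith) (by positivity)
  have hFval : ∀ t : ℝ, F t = (Real.sqrt (1 + 2 * σ ^ 2 * (1 + Real.exp (-α * |t|))))⁻¹ := by
    intro t
    have hne : Real.toNNReal (2 * σ ^ 2 * (1 + Real.exp (-α * |t|))) ≠ 0 :=
      ne_of_gt (Real.toNNReal_pos.mpr (hvpos t))
    have := gauss_int _ hne
    rw [hF]
    simp only [testf_apply]
    rw [hL t, hlaw t, this, Real.coe_toNNReal _ (hvpos t).le]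
  have hc : ∀ t : ℝ, Tendsto (fun n => F (t + φ n)) atTop
      (𝓝 ((Real.sqrt (1 + 2 * σ ^ 2))⁻¹)) := by
    intro t
    have habs : Tendsto (fun n : ℕ => -α * |t + φ n|) atTop atBot := by
      have h1 : Tendsto (fun n : ℕ => |t + (φ n : ℝ)|) atTop atTop := by
        apply tendsto_abs_atTop_atTop.comp
        apply tendsto_atTop_add_const_left
        exact tendsto_natCast_atTop_atTop.comp hφ.tendsto_atTop
      have h2' : Tendsto (fun n : ℕ => α * (-|t + (φ n : ℝ)|)) atTop atBot :=
        (tendsto_neg_atBot_iff.mpr h1).const_mul_atBot hα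
      convert h2' using 2 with n
      ring
    have hexp : Tendsto (fun n : ℕ => Real.exp (-α * |t + φ n|)) atTop (𝓝 0) :=
      Real.tendsto_exp_atBot.comp habs
    have hv : Tendsto (fun n : ℕ => 1 + 2 * σ ^ 2 * (1 + Real.exp (-α * |t + φ n|)))
        atTop (𝓝 (1 + 2 * σ ^ 2)) := by
      have : Tendsto (fun n : ℕ => 1 + 2 * σ ^ 2 * (1 + Real.exp (-α * |t + φ n|)))
          atTop (𝓝 (1 + 2 * σ ^ 2 * (1 + 0))) := by
        exact tendsto_const_nhds.add ((tendsto_const_nhds.add hexp).const_mul _)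
      simpa using this
    have hs : Tendsto (fun n : ℕ => (Real.sqrt (1 + 2 * σ ^ 2 * (1 + Real.exp (-α * |t + φ n|))))⁻¹)
        atTop (𝓝 ((Real.sqrt (1 + 2 * σ ^ 2))⁻¹)) := by
      apply Tendsto.inv₀ ((Real.continuous_sqrt.tendsto _).comp hv)
      positivity
    simpa only [hFval] using hs
  have hG : ∀ t : ℝ, ∫ x, testf x ∂(g t : Measure ℝ) = (Real.sqrt (1 + 2 * σ ^ 2))⁻¹ := by
    intro t
    have := (ProbabilityMeasure.tendsto_iff_forall_integral_tendsto.mp (h1 t)) testf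
    exact tendsto_nhds_unique this (hc t)
  have hF0 : F 0 = (Real.sqrt (1 + 2 * σ ^ 2))⁻¹ := by
    have := (ProbabilityMeasure.tendsto_iff_forall_integral_tendsto.mp (h2 0)) testf
    simp only [hG] at this
    exact (tendsto_nhds_unique tendsto_const_nhds this).symm
  rw [hFval 0] at hF0
  simp only [abs_zero, mul_zero, Real.exp_zero] at hF0
  have h24 : Real.sqrt (1 + 2 * σ ^ 2 * (1 + 1)) = Real.sqrt (1 + 2 * σ ^ 2) :=
    inv_injective hF0
  have := (Real.sqrt_inj (by positivity) (by positivity)).mp h24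
  nlinarith
end

section
/- If a continuous stochastic process X with values in a Polish space X is almost automorphic in distribution (i.e., t ↦ Law(X(t + ·)) ∈ AA(ℝ, P(C_k(ℝ, X)))), then this map is compact almost automorphic: the convergences in the almost automorphy definition are uniform on compact intervals, so t ↦ Law(X(t + ·)) belongs to AA_c(ℝ, P(C_k(ℝ, X))). Moreover, any limit function g obtained along a sequence (t_n) satisfies g(t) = (τ_t)_* g(0) for all t ∈ ℝ. -/
open Filter Topology MeasureTheory Set

/-- Translation of a continuous path: `shift t x = x(t + ·)`. -/
noncomputable def shift {E : Type*} [MetricSpace E] (t : ℝ) (x : C(ℝ, E)) : C(ℝ, E) :=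
  x.comp ⟨fun s => t + s, by continuity⟩

lemma shift_continuous {E : Type*} [MetricSpace E] (t : ℝ) :
    Continuous (shift (E := E) t) :=
  ContinuousMap.continuous_precomp _

lemma shift_shift {E : Type*} [MetricSpace E] (s t : ℝ) (x : C(ℝ, E)) :
    shift t (shift s x) = shift (s + t) x := by
  ext r
  show x (s + (t + r)) = x (s + t + r)
  ring_nf

lemma continuous_shift_left {E : Type*} [MetricSpace E] (x : C(ℝ, E)) :
    Continuous fun t : ℝ => shift t x := by
  have h : (fun t : ℝ => shift t x) =
      (fun c : C(ℝ, ℝ) => x.comp c) ∘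
        (ContinuousMap.curry ⟨fun p : ℝ × ℝ => p.1 + p.2, by continuity⟩) := by
    funext t; ext s; rfl
  rw [h]
  exact (ContinuousMap.continuous_postcomp x).comp
    (ContinuousMap.curry ⟨fun p : ℝ × ℝ => p.1 + p.2, by continuity⟩).continuous

/-- If a process is almost automorphic in distribution, then the map
`t ↦ Law(X(t+·))` is compact almost automorphic (every limit function along a
subsequence is continuous), and every such limit `g` satisfies the consistency
relation `g(t) = (τ_t)_* g(0)`. -/
theorem stmt_15 {E Ω : Type*} [MetricSpace E] [CompleteSpace E] [SecondCountableTopology E]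
    [MeasurableSpace C(ℝ, E)] [BorelSpace C(ℝ, E)]
    [MeasurableSpace Ω] (P : Measure Ω) [IsProbabilityMeasure P]
    (Xp : Ω → C(ℝ, E)) (hXp : Measurable Xp)
    (f : ℝ → ProbabilityMeasure C(ℝ, E))
    (hf : ∀ t : ℝ, (f t : Measure C(ℝ, E)) = Measure.map (fun ω => shift t (Xp ω)) P)
    (haa : IsAlmostAutomorphic f) :
    ∀ (t' : ℕ → ℝ) (g : ℝ → ProbabilityMeasure C(ℝ, E)),
      (∀ t : ℝ, Tendsto (fun n => f (t + t' n)) atTop (𝓝 (g t))) →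
      (∀ t : ℝ, Tendsto (fun n => g (t - t' n)) atTop (𝓝 (f t))) →
      Continuous g ∧
        ∀ t : ℝ, (g t : Measure C(ℝ, E)) = Measure.map (shift t) (g 0 : Measure C(ℝ, E)) := by
  intro t' g h1 h2
  have hcont : ∀ t : ℝ, Continuous (shift (E := E) t) := fun t => shift_continuous t
  have h0 : Tendsto (fun n => f (t' n)) atTop (𝓝 (g 0)) := by
    simpa using h1 0
  have hkey : ∀ t : ℝ, g t = (g 0).map (f_aemble := (hcont t).measurable.aemeasurable) := by
    intro t
    have hmap := ProbabilityMeasure.tendsto_map_of_tendsto_of_continuous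
      (fun n => f (t' n)) (g 0) h0 (hcont t)
    have heq : ∀ n, (f (t' n)).map (hcont t).measurable.aemeasurable = f (t + t' n) := by
      intro n
      apply ProbabilityMeasure.toMeasure_injective
      rw [ProbabilityMeasure.toMeasure_map, hf (t' n), hf (t + t' n),
        show (fun ω => shift (t' n) (Xp ω)) = shift (t' n) ∘ Xp from rfl,
        Measure.map_map (hcont t).measurable ((hcont (t' n)).measurable.comp hXp)]
      congr 1
      funext ω
      show shift t (shift (t' n) (Xp ω)) = shift (t + t' n) (Xp ω)
      rw [shift_shift, add_comm]
    rw [funext heq] at hmap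
    exact tendsto_nhds_unique (h1 t) hmap
  have hmapcont : Continuous fun t : ℝ =>
      (g 0).map (f_aemble := (hcont t).measurable.aemeasurable) := by
    rw [continuous_iff_seqContinuous]
    intro u t₀ hu
    rw [ProbabilityMeasure.tendsto_iff_forall_integral_tendsto]
    intro φ
    have hint : ∀ s : ℝ,
        ∫ x, φ x ∂((g 0).map (f_aemble := (hcont s).measurable.aemeasurable) :
            Measure C(ℝ, E)) = ∫ x, φ (shift s x) ∂(g 0 : Measure C(ℝ, E)) := by
      intro s
      rw [ProbabilityMeasure.toMeasure_map]
      exact integral_map (hcont s).measurable.aemeasurable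
        (φ.continuous.aestronglyMeasurable)
    show Tendsto (fun n => ∫ x, φ x ∂(((g 0).map
        (f_aemble := (hcont (u n)).measurable.aemeasurable)) : Measure C(ℝ, E))) atTop _
    simp only [hint]
    apply tendsto_integral_of_dominated_convergence (fun _ => ‖φ‖)
    · exact fun n => (φ.continuous.comp (hcont (u n))).aestronglyMeasurable
    · exact integrable_const _
    · exact fun n => Eventually.of_forall fun x => φ.norm_coe_le_norm _
    · refine Eventually.of_forall fun x => ?_
      exact (φ.continuous.tendsto _).comp
        (((continuous_shift_left x).tendsto t₀).comp hu)
  constructor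
  · have : g = fun t => (g 0).map (f_aemble := (hcont t).measurable.aemeasurable) :=
      funext hkey
    rw [this]
    exact hmapcont
  · intro t
    rw [hkey t]
    exact ProbabilityMeasure.toMeasure_map _ _
end
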